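/- arXiv:0912.0239 — 3 statements merged into one kernel-verified Lean document; each statement's English description precedes it below -/
import Mathlib

section
/- The number of non-crossing permutations of {1,…,n} (permutations whose arc diagram contains no 2-crossing, i.e. crossing number at most 1) equals the n-th Catalan number (1/(n+1))·C(2n,n). -/
/-- Upper k-crossing: a_1 < ... < a_k ≤ σ(a_1) < ... < σ(a_k). -/
def IsUpperCrossing (n k : ℕ) (σ : Equiv.Perm (Fin n)) (a : Fin k → Fin n) : Prop :=
  StrictMono a ∧ StrictMono (fun i => σ (a i)) ∧ ∀ i j, (a i : ℕ) ≤ (σ (a j) : ℕ)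

/-- Lower k-crossing: σ(a_1) < ... < σ(a_k) < a_1 < ... < a_k. -/
def IsLowerCrossing (n k : ℕ) (σ : Equiv.Perm (Fin n)) (a : Fin k → Fin n) : Prop :=
  StrictMono a ∧ StrictMono (fun i => σ (a i)) ∧ ∀ i j, (σ (a i) : ℕ) < (a j : ℕ)

/-- Upper (enhanced) k-nesting: a_1 < ... < a_k ≤ σ(a_k) < ... < σ(a_1). -/
def IsUpperNesting (n k : ℕ) (σ : Equiv.Perm (Fin n)) (a : Fin k → Fin n) : Prop :=
  StrictMono a ∧ StrictAnti (fun i => σ (a i)) ∧ ∀ i j, (a i : ℕ) ≤ (σ (a j) : ℕ)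

/-- Lower k-nesting: σ(a_1) < ... < σ(a_k) < a_k < ... < a_1, reindexed so that
`a` is increasing and `σ ∘ a` is decreasing, with every σ-value below every position. -/
def IsLowerNesting (n k : ℕ) (σ : Equiv.Perm (Fin n)) (a : Fin k → Fin n) : Prop :=
  StrictMono a ∧ StrictAnti (fun i => σ (a i)) ∧ ∀ i j, (σ (a i) : ℕ) < (a j : ℕ)

/-- σ contains a k-crossing. -/
def HasCrossing (n k : ℕ) (σ : Equiv.Perm (Fin n)) : Prop :=
  ∃ a : Fin k → Fin n, IsUpperCrossing n k σ a ∨ IsLowerCrossing n k σ a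

/-- σ contains a k-nesting. -/
def HasNesting (n k : ℕ) (σ : Equiv.Perm (Fin n)) : Prop :=
  ∃ a : Fin k → Fin n, IsUpperNesting n k σ a ∨ IsLowerNesting n k σ a

/-- The crossing number of σ: the largest k such that σ has a k-crossing. -/
noncomputable def crossNum (n : ℕ) (σ : Equiv.Perm (Fin n)) : ℕ :=
  sSup {k | HasCrossing n k σ}

/-- The nesting number of σ: the largest k such that σ has a k-nesting. -/
noncomputable def nestNum (n : ℕ) (σ : Equiv.Perm (Fin n)) : ℕ :=
  sSup {k | HasNesting n k σ}


section NCProof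

section Glue1
variable (n k : ℕ)

def Cross' (x1 y1 x2 y2 : ℕ) : Prop :=
  (x1 < x2 ∧ x2 ≤ y1 ∧ y1 < y2) ∨ (y1 < y2 ∧ y2 < x1 ∧ x1 < x2)

def NCF (d n : ℕ) (σ : Equiv.Perm (Fin n)) : Prop :=
  ∀ i j : Fin n, ¬ Cross' ((i : ℕ) + d) (σ i) ((j : ℕ) + d) (σ j)

def glue1 (hk : k ≤ n) (τ : Equiv.Perm (Fin k)) (ρ : Equiv.Perm (Fin (n - k))) :
    Fin (n + 1) → Fin (n + 1) := fun p =>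
  if h0 : (p : ℕ) = 0 then ⟨k, by omega⟩
  else if h1 : (p : ℕ) ≤ k then
    ⟨(τ ⟨(p : ℕ) - 1, by omega⟩ : ℕ), by
      have := (τ ⟨(p : ℕ) - 1, by omega⟩).isLt; omega⟩
  else
    ⟨(ρ ⟨(p : ℕ) - (k + 1), by have := p.isLt; omega⟩ : ℕ) + (k + 1), by
      have := (ρ ⟨(p : ℕ) - (k + 1), by have := p.isLt; omega⟩).isLt; omega⟩

variable (hk : k ≤ n) (τ : Equiv.Perm (Fin k)) (ρ : Equiv.Perm (Fin (n - k)))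

lemma glue1_val_zero (p : Fin (n + 1)) (h : (p : ℕ) = 0) :
    (glue1 n k hk τ ρ p : ℕ) = k := by
  unfold glue1; rw [dif_pos h]

lemma glue1_val_mid (p : Fin (n + 1)) (i : Fin k) (h : (i : ℕ) + 1 = (p : ℕ)) :
    (glue1 n k hk τ ρ p : ℕ) = τ i := by
  have h1 : ¬ ((p : ℕ) = 0) := by omega
  have h2 : (p : ℕ) ≤ k := by have := i.isLt; omega
  unfold glue1; rw [dif_neg h1, dif_pos h2]
  exact congrArg (fun x => ((τ x : Fin k) : ℕ)) (Fin.ext (show (p : ℕ) - 1 = (i : ℕ) by omega))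

lemma glue1_val_high (p : Fin (n + 1)) (i : Fin (n - k)) (h : (i : ℕ) + (k + 1) = (p : ℕ)) :
    (glue1 n k hk τ ρ p : ℕ) = (ρ i : ℕ) + (k + 1) := by
  have h1 : ¬ ((p : ℕ) = 0) := by omega
  have h2 : ¬ ((p : ℕ) ≤ k) := by omega
  unfold glue1; rw [dif_neg h1, dif_neg h2]
  exact congrArg (fun x => ((ρ x : Fin (n - k)) : ℕ) + (k + 1))
    (Fin.ext (show (p : ℕ) - (k + 1) = (i : ℕ) by omega))

lemma glue1_spec (p : Fin (n + 1)) :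
    ((p : ℕ) = 0 ∧ (glue1 n k hk τ ρ p : ℕ) = k) ∨
    (∃ i : Fin k, (i : ℕ) + 1 = (p : ℕ) ∧ (glue1 n k hk τ ρ p : ℕ) = τ i) ∨
    (∃ i : Fin (n - k), (i : ℕ) + (k + 1) = (p : ℕ) ∧
      (glue1 n k hk τ ρ p : ℕ) = (ρ i : ℕ) + (k + 1)) := by
  by_cases h0 : (p : ℕ) = 0
  · exact Or.inl ⟨h0, glue1_val_zero n k hk τ ρ p h0⟩
  by_cases h1 : (p : ℕ) ≤ k
  · refine Or.inr (Or.inl ⟨⟨(p : ℕ) - 1, by omega⟩, show (p : ℕ) - 1 + 1 = (p : ℕ) by omega, ?_⟩)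
    exact glue1_val_mid n k hk τ ρ p _ (show (p : ℕ) - 1 + 1 = (p : ℕ) by omega)
  · refine Or.inr (Or.inr ⟨⟨(p : ℕ) - (k + 1), by have := p.isLt; omega⟩,
      show (p : ℕ) - (k + 1) + (k + 1) = (p : ℕ) by omega, ?_⟩)
    exact glue1_val_high n k hk τ ρ p _ (show (p : ℕ) - (k + 1) + (k + 1) = (p : ℕ) by omega)

lemma glue1_inj : Function.Injective (glue1 n k hk τ ρ) := by
  intro p q h
  have h' : (glue1 n k hk τ ρ p : ℕ) = (glue1 n k hk τ ρ q : ℕ) := congrArg Fin.val h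
  rcases glue1_spec n k hk τ ρ p with ⟨e0, v0⟩ | ⟨i, ei, vi⟩ | ⟨i, ei, vi⟩ <;>
    rcases glue1_spec n k hk τ ρ q with ⟨f0, w0⟩ | ⟨j, fj, wj⟩ | ⟨j, fj, wj⟩ <;>
    apply Fin.ext
  · omega
  · have := (τ j).isLt; omega
  · omega
  · have := (τ i).isLt; omega
  · have hij : (i : ℕ) = (j : ℕ) :=
      congrArg Fin.val (Equiv.injective τ (Fin.ext (show (τ i : ℕ) = (τ j : ℕ) by omega)))
    omega
  · have := (τ i).isLt; omega
  · omega
  · have := (τ j).isLt; omega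
  · have hij : (i : ℕ) = (j : ℕ) :=
      congrArg Fin.val (Equiv.injective ρ (Fin.ext (show (ρ i : ℕ) = (ρ j : ℕ) by omega)))
    omega

noncomputable def glue1p : Equiv.Perm (Fin (n + 1)) :=
  Equiv.ofBijective _ (Finite.injective_iff_bijective.mp (glue1_inj n k hk τ ρ))

lemma glue1p_apply (p : Fin (n + 1)) : glue1p n k hk τ ρ p = glue1 n k hk τ ρ p := rfl

lemma glue1_ncf (hτ : NCF 1 k τ) (hρ : NCF 0 (n - k) ρ) :
    NCF 0 (n + 1) (glue1p n k hk τ ρ) := by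
  intro p q hc
  have hc' : Cross' ((p : ℕ) + 0) (glue1 n k hk τ ρ p : ℕ)
      ((q : ℕ) + 0) (glue1 n k hk τ ρ q : ℕ) := hc
  rcases glue1_spec n k hk τ ρ p with ⟨e0, v0⟩ | ⟨i, ei, vi⟩ | ⟨i, ei, vi⟩ <;>
    rcases glue1_spec n k hk τ ρ q with ⟨f0, w0⟩ | ⟨j, fj, wj⟩ | ⟨j, fj, wj⟩
  · simp only [Cross'] at hc'; omega
  · have := (τ j).isLt; simp only [Cross'] at hc'; omega
  · simp only [Cross'] at hc'; omega
  · have := (τ i).isLt; simp only [Cross'] at hc'; omega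
  · exact hτ i j (by simp only [Cross'] at hc' ⊢; omega)
  · have := (τ i).isLt; simp only [Cross'] at hc'; omega
  · simp only [Cross'] at hc'; omega
  · have := (τ j).isLt; simp only [Cross'] at hc'; omega
  · exact hρ i j (by simp only [Cross'] at hc' ⊢; omega)

end Glue1

noncomputable def permOfInj {m : ℕ} (f : Fin m → Fin m) (hf : Function.Injective f) :
    Equiv.Perm (Fin m) := Equiv.ofBijective f (Finite.injective_iff_bijective.mp hf)

lemma permOfInj_apply {m : ℕ} (f : Fin m → Fin m) (hf : Function.Injective f) (i : Fin m) :
    permOfInj f hf i = f i := rfl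

section Split1

lemma card_filter_interval (N a b : ℕ) (hb : b ≤ N) :
    (Finset.univ.filter (fun x : Fin N => a ≤ (x : ℕ) ∧ (x : ℕ) < b)).card = b - a := by
  rw [← Nat.card_Ico a b]
  apply Finset.card_bij (fun (x : Fin N) _ => (x : ℕ))
  · intro x hx
    simp only [Finset.mem_filter] at hx
    simp only [Finset.mem_Ico]
    omega
  · intro x _ y _ h; exact Fin.ext h
  · intro y hy
    simp only [Finset.mem_Ico] at hy
    exact ⟨⟨y, by omega⟩, by
      simp only [Finset.mem_filter, Finset.mem_univ]; exact ⟨trivial, by omega⟩, rfl⟩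

lemma pigeon_low {N k : ℕ} (σ : Equiv.Perm (Fin N))
    (hmap : ∀ p : Fin N, 1 ≤ (p : ℕ) → (p : ℕ) ≤ k → (σ p : ℕ) < k)
    (hk : k < N) :
    ∀ p : Fin N, k < (p : ℕ) → (σ p : ℕ) < k → False := by
  intro p hp hlt
  have hcs := card_filter_interval N 1 (k + 1) (by omega)
  have hct := card_filter_interval N 0 k (by omega)
  have hsurj := Finset.surj_on_of_inj_on_of_card_le
    (s := Finset.univ.filter (fun x : Fin N => 1 ≤ (x : ℕ) ∧ (x : ℕ) < k + 1))
    (t := Finset.univ.filter (fun x : Fin N => 0 ≤ (x : ℕ) ∧ (x : ℕ) < k))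
    (fun a _ => σ a)
    (by
      intro a ha
      simp only [Finset.mem_filter, Finset.mem_univ, true_and] at ha ⊢
      exact ⟨Nat.zero_le _, hmap a ha.1 (by omega)⟩)
    (by intro a₁ a₂ _ _ h; exact σ.injective h)
    (by omega)
  obtain ⟨a, ha, hba⟩ := hsurj (σ p)
    (by simp only [Finset.mem_filter, Finset.mem_univ, true_and]; exact ⟨Nat.zero_le _, hlt⟩)
  simp only [Finset.mem_filter, Finset.mem_univ, true_and] at ha
  have : p = a := σ.injective hba
  omega


end Split1

section Split1b

lemma split1 {n : ℕ} {σ : Equiv.Perm (Fin (n + 1))} (hσ : NCF 0 (n + 1) σ) :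
    ∃ (k : Fin (n + 1)) (τ : Equiv.Perm (Fin (k : ℕ)))
      (ρ : Equiv.Perm (Fin (n - (k : ℕ)))),
      NCF 1 (k : ℕ) τ ∧ NCF 0 (n - (k : ℕ)) ρ ∧
      glue1p n (k : ℕ) (Nat.lt_succ_iff.mp k.isLt) τ ρ = σ := by
  classical
  set km : ℕ := (σ ⟨0, Nat.succ_pos n⟩ : ℕ) with hkm
  have e0 : ((⟨0, Nat.succ_pos n⟩ : Fin (n + 1)) : ℕ) = 0 := rfl
  have hk : km ≤ n := by have := (σ ⟨0, Nat.succ_pos n⟩).isLt; omega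
  have S1 : ∀ p : Fin (n + 1), 1 ≤ (p : ℕ) → (p : ℕ) ≤ km → (σ p : ℕ) < km := by
    intro p h1 h2
    have hne : (σ p : ℕ) ≠ km := by
      intro h
      have hpz : p = ⟨0, Nat.succ_pos n⟩ := σ.injective (Fin.ext (by omega))
      have := congrArg Fin.val hpz
      omega
    by_contra hge
    exact hσ ⟨0, Nat.succ_pos n⟩ p (Or.inl ⟨by omega, by omega, by omega⟩)
  have S2 : ∀ p : Fin (n + 1), km < (p : ℕ) → km < (σ p : ℕ) := by
    intro p hp
    by_contra hle
    have hne : (σ p : ℕ) ≠ km := by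
      intro h
      have hpz : p = ⟨0, Nat.succ_pos n⟩ := σ.injective (Fin.ext (by omega))
      have := congrArg Fin.val hpz
      omega
    exact pigeon_low σ S1 (by omega) p hp (by omega)
  -- τ
  have hbτ : ∀ i : Fin km, (σ ⟨(i : ℕ) + 1, by have := i.isLt; omega⟩ : ℕ) < km := by
    intro i
    have hi : (i : ℕ) < km := i.isLt
    have hpi : (i : ℕ) + 1 < n + 1 := by omega
    exact S1 ⟨(i : ℕ) + 1, hpi⟩ (show 1 ≤ (i : ℕ) + 1 by omega)
      (show (i : ℕ) + 1 ≤ km by omega)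
  have hinjτ : Function.Injective
      (fun i : Fin km => (⟨(σ ⟨(i : ℕ) + 1, by have := i.isLt; omega⟩ : ℕ), hbτ i⟩ : Fin km)) := by
    intro i j h
    have h0 := congrArg Fin.val h
    have h' : (σ ⟨(i : ℕ) + 1, by have := i.isLt; omega⟩ : ℕ)
        = (σ ⟨(j : ℕ) + 1, by have := j.isLt; omega⟩ : ℕ) := h0
    have h'' : (i : ℕ) + 1 = (j : ℕ) + 1 := congrArg Fin.val (σ.injective (Fin.ext h'))
    exact Fin.ext (by omega)
  -- ρ
  have hbρ : ∀ i : Fin (n - km),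
      (σ ⟨(i : ℕ) + (km + 1), by have := i.isLt; omega⟩ : ℕ) - (km + 1) < n - km := by
    intro i
    have hi : (i : ℕ) < n - km := i.isLt
    have hpi : (i : ℕ) + (km + 1) < n + 1 := by omega
    have h1 : km < (σ ⟨(i : ℕ) + (km + 1), hpi⟩ : ℕ) :=
      S2 ⟨(i : ℕ) + (km + 1), hpi⟩ (show km < (i : ℕ) + (km + 1) by omega)
    have h2 : (σ ⟨(i : ℕ) + (km + 1), hpi⟩ : ℕ) < n + 1 := (σ ⟨(i : ℕ) + (km + 1), hpi⟩).isLt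
    have h3 : (σ ⟨(i : ℕ) + (km + 1), by have := i.isLt; omega⟩ : ℕ)
        = (σ ⟨(i : ℕ) + (km + 1), hpi⟩ : ℕ) := rfl
    omega
  have hS2ρ : ∀ i : Fin (n - km),
      km < (σ ⟨(i : ℕ) + (km + 1), by have := i.isLt; omega⟩ : ℕ) := by
    intro i
    have hi : (i : ℕ) < n - km := i.isLt
    have hpi : (i : ℕ) + (km + 1) < n + 1 := by omega
    exact S2 ⟨(i : ℕ) + (km + 1), hpi⟩ (show km < (i : ℕ) + (km + 1) by omega)
  have hinjρ : Function.Injective (fun i : Fin (n - km) =>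
      (⟨(σ ⟨(i : ℕ) + (km + 1), by have := i.isLt; omega⟩ : ℕ) - (km + 1), hbρ i⟩
        : Fin (n - km))) := by
    intro i j h
    have h0 := congrArg Fin.val h
    have hpi : (i : ℕ) + (km + 1) < n + 1 := by have := i.isLt; omega
    have hpj : (j : ℕ) + (km + 1) < n + 1 := by have := j.isLt; omega
    have h' : (σ ⟨(i : ℕ) + (km + 1), hpi⟩ : ℕ) - (km + 1)
        = (σ ⟨(j : ℕ) + (km + 1), hpj⟩ : ℕ) - (km + 1) := h0
    have hi : km < (σ ⟨(i : ℕ) + (km + 1), hpi⟩ : ℕ) := hS2ρ i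
    have hj : km < (σ ⟨(j : ℕ) + (km + 1), hpj⟩ : ℕ) := hS2ρ j
    have h''' : (σ ⟨(i : ℕ) + (km + 1), hpi⟩ : Fin (n + 1))
        = σ ⟨(j : ℕ) + (km + 1), hpj⟩ := Fin.ext (by omega)
    have h'' : (i : ℕ) + (km + 1) = (j : ℕ) + (km + 1) :=
      congrArg Fin.val (σ.injective h''')
    exact Fin.ext (by omega)
  refine ⟨⟨km, by omega⟩, permOfInj _ hinjτ, permOfInj _ hinjρ, ?_, ?_, ?_⟩
  · -- NCF 1 km τ
    intro i j hc
    have hi : (i : ℕ) < km := i.isLt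
    have hj : (j : ℕ) < km := j.isLt
    have hpi : (i : ℕ) + 1 < n + 1 := by omega
    have hpj : (j : ℕ) + 1 < n + 1 := by omega
    have vi : ((permOfInj _ hinjτ) i : ℕ) = (σ ⟨(i : ℕ) + 1, hpi⟩ : ℕ) := rfl
    have vj : ((permOfInj _ hinjτ) j : ℕ) = (σ ⟨(j : ℕ) + 1, hpj⟩ : ℕ) := rfl
    have ei : ((⟨(i : ℕ) + 1, hpi⟩ : Fin (n + 1)) : ℕ) = (i : ℕ) + 1 := rfl
    have ej : ((⟨(j : ℕ) + 1, hpj⟩ : Fin (n + 1)) : ℕ) = (j : ℕ) + 1 := rfl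
    exact hσ ⟨(i : ℕ) + 1, hpi⟩ ⟨(j : ℕ) + 1, hpj⟩ (by simp only [Cross'] at hc ⊢; omega)
  · -- NCF 0 (n-km) ρ
    intro i j hc
    have hi : (i : ℕ) < n - km := i.isLt
    have hj : (j : ℕ) < n - km := j.isLt
    have hpi : (i : ℕ) + (km + 1) < n + 1 := by omega
    have hpj : (j : ℕ) + (km + 1) < n + 1 := by omega
    have vi : ((permOfInj _ hinjρ) i : ℕ) = (σ ⟨(i : ℕ) + (km + 1), hpi⟩ : ℕ) - (km + 1) := rfl
    have vj : ((permOfInj _ hinjρ) j : ℕ) = (σ ⟨(j : ℕ) + (km + 1), hpj⟩ : ℕ) - (km + 1) := rfl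
    have bi : km < (σ ⟨(i : ℕ) + (km + 1), hpi⟩ : ℕ) := hS2ρ i
    have bj : km < (σ ⟨(j : ℕ) + (km + 1), hpj⟩ : ℕ) := hS2ρ j
    have ei : ((⟨(i : ℕ) + (km + 1), hpi⟩ : Fin (n + 1)) : ℕ) = (i : ℕ) + (km + 1) := rfl
    have ej : ((⟨(j : ℕ) + (km + 1), hpj⟩ : Fin (n + 1)) : ℕ) = (j : ℕ) + (km + 1) := rfl
    exact hσ ⟨(i : ℕ) + (km + 1), hpi⟩ ⟨(j : ℕ) + (km + 1), hpj⟩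
      (by simp only [Cross'] at hc ⊢; omega)
  · -- glue equals σ
    show glue1p n km hk (permOfInj _ hinjτ) (permOfInj _ hinjρ) = σ
    apply Equiv.ext
    intro p
    apply Fin.ext
    show (glue1 n km hk (permOfInj _ hinjτ) (permOfInj _ hinjρ) p : ℕ) = (σ p : ℕ)
    by_cases h0 : (p : ℕ) = 0
    · exact (glue1_val_zero n km hk (permOfInj _ hinjτ) (permOfInj _ hinjρ) p h0).trans
        (congrArg (fun x => ((σ x : Fin (n + 1)) : ℕ))
          (Fin.ext (show (0 : ℕ) = (p : ℕ) by omega)))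
    by_cases h1 : (p : ℕ) ≤ km
    · have hip : (p : ℕ) - 1 < km := by omega
      have hq : (p : ℕ) - 1 + 1 < n + 1 := by have := p.isLt; omega
      refine (glue1_val_mid n km hk (permOfInj _ hinjτ) (permOfInj _ hinjρ) p
        ⟨(p : ℕ) - 1, hip⟩ (show (p : ℕ) - 1 + 1 = (p : ℕ) by omega)).trans ?_
      refine Eq.trans (show ((permOfInj _ hinjτ) ⟨(p : ℕ) - 1, hip⟩ : ℕ)
          = (σ ⟨(p : ℕ) - 1 + 1, hq⟩ : ℕ) from rfl) ?_
      exact congrArg (fun x => ((σ x : Fin (n + 1)) : ℕ))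
        (Fin.ext (show (p : ℕ) - 1 + 1 = (p : ℕ) by omega))
    · have hip : (p : ℕ) - (km + 1) < n - km := by have := p.isLt; omega
      have hq : (p : ℕ) - (km + 1) + (km + 1) < n + 1 := by have := p.isLt; omega
      refine (glue1_val_high n km hk (permOfInj _ hinjτ) (permOfInj _ hinjρ) p
        ⟨(p : ℕ) - (km + 1), hip⟩
        (show (p : ℕ) - (km + 1) + (km + 1) = (p : ℕ) by omega)).trans ?_
      refine Eq.trans (congrArg (fun x => x + (km + 1))
        (show ((permOfInj _ hinjρ) ⟨(p : ℕ) - (km + 1), hip⟩ : ℕ)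
          = (σ ⟨(p : ℕ) - (km + 1) + (km + 1), hq⟩ : ℕ) - (km + 1) from rfl)) ?_
      have hge : km + 1 ≤ (σ ⟨(p : ℕ) - (km + 1) + (km + 1), hq⟩ : ℕ) :=
        S2 ⟨(p : ℕ) - (km + 1) + (km + 1), hq⟩
          (show km < (p : ℕ) - (km + 1) + (km + 1) by omega)
      refine (Nat.sub_add_cancel hge).trans ?_
      exact congrArg (fun x => ((σ x : Fin (n + 1)) : ℕ))
        (Fin.ext (show (p : ℕ) - (km + 1) + (km + 1) = (p : ℕ) by omega))

end Split1b

noncomputable def NCnt (n : ℕ) : ℕ := Nat.card {σ : Equiv.Perm (Fin n) // NCF 0 n σ}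
noncomputable def DCnt (n : ℕ) : ℕ := Nat.card {σ : Equiv.Perm (Fin n) // NCF 1 n σ}

lemma card_d_zero (d : ℕ) : Nat.card {σ : Equiv.Perm (Fin 0) // NCF d 0 σ} = 1 := by
  have h : ∀ σ : Equiv.Perm (Fin 0), NCF d 0 σ := fun σ i _ => i.elim0
  rw [Nat.card_congr (Equiv.subtypeUnivEquiv h)]
  simp [Nat.card_eq_fintype_card]

lemma NCnt_zero : NCnt 0 = 1 := card_d_zero 0
lemma DCnt_zero : DCnt 0 = 1 := card_d_zero 1

lemma nat_card_sigma {n : ℕ} (α : Fin n → Type*) [∀ i, Finite (α i)] :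
    Nat.card (Σ i, α i) = ∑ i, Nat.card (α i) := by
  letI : ∀ i, Fintype (α i) := fun i => Fintype.ofFinite (α i)
  simp [Nat.card_eq_fintype_card, Fintype.card_sigma]

noncomputable def G1 (n : ℕ)
    (x : Σ k : Fin (n + 1), {τ : Equiv.Perm (Fin (k : ℕ)) // NCF 1 (k : ℕ) τ} ×
      {ρ : Equiv.Perm (Fin (n - (k : ℕ))) // NCF 0 (n - (k : ℕ)) ρ}) :
    {σ : Equiv.Perm (Fin (n + 1)) // NCF 0 (n + 1) σ} :=
  ⟨glue1p n (x.1 : ℕ) (Nat.lt_succ_iff.mp x.1.isLt) x.2.1.1 x.2.2.1,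
    glue1_ncf n (x.1 : ℕ) _ _ _ x.2.1.2 x.2.2.2⟩

lemma G1_inj (n : ℕ) : Function.Injective (G1 n) := by
  intro x y h
  obtain ⟨k, ⟨τ, hτ⟩, ⟨ρ, hρ⟩⟩ := x
  obtain ⟨k', ⟨τ', hτ'⟩, ⟨ρ', hρ'⟩⟩ := y
  have hperm := congrArg Subtype.val h
  have hk : k = k' := by
    have h0 : ((glue1p n (k : ℕ) (Nat.lt_succ_iff.mp k.isLt) τ ρ) ⟨0, Nat.succ_pos n⟩ : ℕ)
        = ((glue1p n (k' : ℕ) (Nat.lt_succ_iff.mp k'.isLt) τ' ρ') ⟨0, Nat.succ_pos n⟩ : ℕ) :=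
      congrArg (fun e : Equiv.Perm (Fin (n + 1)) =>
        ((e ⟨0, Nat.succ_pos n⟩ : Fin (n + 1)) : ℕ)) hperm
    have v1 : ((glue1p n (k : ℕ) (Nat.lt_succ_iff.mp k.isLt) τ ρ) ⟨0, Nat.succ_pos n⟩ : ℕ)
        = (k : ℕ) := glue1_val_zero n (k : ℕ) _ τ ρ _ rfl
    have v2 : ((glue1p n (k' : ℕ) (Nat.lt_succ_iff.mp k'.isLt) τ' ρ') ⟨0, Nat.succ_pos n⟩ : ℕ)
        = (k' : ℕ) := glue1_val_zero n (k' : ℕ) _ τ' ρ' _ rfl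
    exact Fin.ext (by omega)
  subst hk
  have hττ : τ = τ' := by
    apply Equiv.ext
    intro i
    have hi : (i : ℕ) < (k : ℕ) := i.isLt
    have hpi : (i : ℕ) + 1 < n + 1 := by have := k.isLt; omega
    have hv : ((glue1p n (k : ℕ) (Nat.lt_succ_iff.mp k.isLt) τ ρ) ⟨(i : ℕ) + 1, hpi⟩ : ℕ)
        = ((glue1p n (k : ℕ) (Nat.lt_succ_iff.mp k.isLt) τ' ρ') ⟨(i : ℕ) + 1, hpi⟩ : ℕ) :=
      congrArg (fun e : Equiv.Perm (Fin (n + 1)) =>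
        ((e ⟨(i : ℕ) + 1, hpi⟩ : Fin (n + 1)) : ℕ)) hperm
    have w1 : ((glue1p n (k : ℕ) (Nat.lt_succ_iff.mp k.isLt) τ ρ) ⟨(i : ℕ) + 1, hpi⟩ : ℕ)
        = (τ i : ℕ) := glue1_val_mid n (k : ℕ) _ τ ρ _ i rfl
    have w2 : ((glue1p n (k : ℕ) (Nat.lt_succ_iff.mp k.isLt) τ' ρ') ⟨(i : ℕ) + 1, hpi⟩ : ℕ)
        = (τ' i : ℕ) := glue1_val_mid n (k : ℕ) _ τ' ρ' _ i rfl
    exact Fin.ext (by omega)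
  subst hττ
  have hρρ : ρ = ρ' := by
    apply Equiv.ext
    intro i
    have hi : (i : ℕ) < n - (k : ℕ) := i.isLt
    have hpi : (i : ℕ) + ((k : ℕ) + 1) < n + 1 := by omega
    have hv : ((glue1p n (k : ℕ) (Nat.lt_succ_iff.mp k.isLt) τ ρ)
          ⟨(i : ℕ) + ((k : ℕ) + 1), hpi⟩ : ℕ)
        = ((glue1p n (k : ℕ) (Nat.lt_succ_iff.mp k.isLt) τ ρ')
          ⟨(i : ℕ) + ((k : ℕ) + 1), hpi⟩ : ℕ) :=
      congrArg (fun e : Equiv.Perm (Fin (n + 1)) =>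
        ((e ⟨(i : ℕ) + ((k : ℕ) + 1), hpi⟩ : Fin (n + 1)) : ℕ)) hperm
    have w1 : ((glue1p n (k : ℕ) (Nat.lt_succ_iff.mp k.isLt) τ ρ)
        ⟨(i : ℕ) + ((k : ℕ) + 1), hpi⟩ : ℕ)
        = (ρ i : ℕ) + ((k : ℕ) + 1) := glue1_val_high n (k : ℕ) _ τ ρ _ i rfl
    have w2 : ((glue1p n (k : ℕ) (Nat.lt_succ_iff.mp k.isLt) τ ρ')
        ⟨(i : ℕ) + ((k : ℕ) + 1), hpi⟩ : ℕ)
        = (ρ' i : ℕ) + ((k : ℕ) + 1) := glue1_val_high n (k : ℕ) _ τ ρ' _ i rfl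
    exact Fin.ext (by omega)
  subst hρρ
  rfl

lemma G1_surj (n : ℕ) : Function.Surjective (G1 n) := by
  rintro ⟨σ, hσ⟩
  obtain ⟨k, τ, ρ, hτ, hρ, heq⟩ := split1 hσ
  exact ⟨⟨k, ⟨τ, hτ⟩, ⟨ρ, hρ⟩⟩, Subtype.ext heq⟩

lemma NCnt_succ (n : ℕ) :
    NCnt (n + 1) = ∑ k ∈ Finset.range (n + 1), DCnt k * NCnt (n - k) := by
  have e1 : NCnt (n + 1) = Nat.card (Σ k : Fin (n + 1),
      {τ : Equiv.Perm (Fin (k : ℕ)) // NCF 1 (k : ℕ) τ} ×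
      {ρ : Equiv.Perm (Fin (n - (k : ℕ))) // NCF 0 (n - (k : ℕ)) ρ}) :=
    (Nat.card_congr (Equiv.ofBijective (G1 n) ⟨G1_inj n, G1_surj n⟩)).symm
  rw [e1, nat_card_sigma]
  rw [← Fin.sum_univ_eq_sum_range (fun k => DCnt k * NCnt (n - k)) (n + 1)]
  congr 1
  funext k
  rw [Nat.card_prod]
  rfl

section Glue2
variable (K m : ℕ)

def glue2 (hm : m ≤ K) (ρ : Equiv.Perm (Fin m)) (τ2 : Equiv.Perm (Fin (K - m))) :
    Fin (K + 1) → Fin (K + 1) := fun i =>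
  if h1 : (i : ℕ) < m then ⟨(ρ ⟨(i : ℕ), h1⟩ : ℕ) + 1, by
    have := (ρ ⟨(i : ℕ), h1⟩).isLt; omega⟩
  else if h2 : (i : ℕ) = m then ⟨0, by omega⟩
  else ⟨(τ2 ⟨(i : ℕ) - (m + 1), by have := i.isLt; omega⟩ : ℕ) + (m + 1), by
    have := (τ2 ⟨(i : ℕ) - (m + 1), by have := i.isLt; omega⟩).isLt; omega⟩

variable (hm : m ≤ K) (ρ : Equiv.Perm (Fin m)) (τ2 : Equiv.Perm (Fin (K - m)))

lemma glue2_val_low (i : Fin (K + 1)) (a : Fin m) (h : (a : ℕ) = (i : ℕ)) :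
    (glue2 K m hm ρ τ2 i : ℕ) = (ρ a : ℕ) + 1 := by
  have h1 : (i : ℕ) < m := by have := a.isLt; omega
  unfold glue2; rw [dif_pos h1]
  exact congrArg (fun x => ((ρ x : Fin m) : ℕ) + 1) (Fin.ext (show (i : ℕ) = (a : ℕ) by omega))

lemma glue2_val_zero (i : Fin (K + 1)) (h : (i : ℕ) = m) :
    (glue2 K m hm ρ τ2 i : ℕ) = 0 := by
  have h1 : ¬ ((i : ℕ) < m) := by omega
  unfold glue2; rw [dif_neg h1, dif_pos h]

lemma glue2_val_high (i : Fin (K + 1)) (a : Fin (K - m)) (h : (a : ℕ) + (m + 1) = (i : ℕ)) :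
    (glue2 K m hm ρ τ2 i : ℕ) = (τ2 a : ℕ) + (m + 1) := by
  have h1 : ¬ ((i : ℕ) < m) := by omega
  have h2 : ¬ ((i : ℕ) = m) := by omega
  unfold glue2; rw [dif_neg h1, dif_neg h2]
  exact congrArg (fun x => ((τ2 x : Fin (K - m)) : ℕ) + (m + 1))
    (Fin.ext (show (i : ℕ) - (m + 1) = (a : ℕ) by omega))

lemma glue2_spec (i : Fin (K + 1)) :
    (∃ a : Fin m, (a : ℕ) = (i : ℕ) ∧ (glue2 K m hm ρ τ2 i : ℕ) = (ρ a : ℕ) + 1) ∨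
    ((i : ℕ) = m ∧ (glue2 K m hm ρ τ2 i : ℕ) = 0) ∨
    (∃ a : Fin (K - m), (a : ℕ) + (m + 1) = (i : ℕ) ∧
      (glue2 K m hm ρ τ2 i : ℕ) = (τ2 a : ℕ) + (m + 1)) := by
  by_cases h1 : (i : ℕ) < m
  · exact Or.inl ⟨⟨(i : ℕ), h1⟩, rfl, glue2_val_low K m hm ρ τ2 i ⟨(i : ℕ), h1⟩ rfl⟩
  by_cases h2 : (i : ℕ) = m
  · exact Or.inr (Or.inl ⟨h2, glue2_val_zero K m hm ρ τ2 i h2⟩)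
  · refine Or.inr (Or.inr ⟨⟨(i : ℕ) - (m + 1), by have := i.isLt; omega⟩,
      show (i : ℕ) - (m + 1) + (m + 1) = (i : ℕ) by omega, ?_⟩)
    exact glue2_val_high K m hm ρ τ2 i _ (show (i : ℕ) - (m + 1) + (m + 1) = (i : ℕ) by omega)

lemma glue2_inj : Function.Injective (glue2 K m hm ρ τ2) := by
  intro p q h
  have h' : (glue2 K m hm ρ τ2 p : ℕ) = (glue2 K m hm ρ τ2 q : ℕ) := congrArg Fin.val h
  rcases glue2_spec K m hm ρ τ2 p with ⟨a, ea, va⟩ | ⟨e0, v0⟩ | ⟨a, ea, va⟩ <;>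
    rcases glue2_spec K m hm ρ τ2 q with ⟨b, fb, wb⟩ | ⟨f0, w0⟩ | ⟨b, fb, wb⟩ <;>
    apply Fin.ext
  · have hab : (a : ℕ) = (b : ℕ) :=
      congrArg Fin.val (Equiv.injective ρ (Fin.ext (show (ρ a : ℕ) = (ρ b : ℕ) by omega)))
    omega
  · omega
  · have := (ρ a).isLt; omega
  · omega
  · omega
  · omega
  · have := (ρ b).isLt; omega
  · omega
  · have hab : (a : ℕ) = (b : ℕ) :=
      congrArg Fin.val (Equiv.injective τ2 (Fin.ext (show (τ2 a : ℕ) = (τ2 b : ℕ) by omega)))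
    omega

noncomputable def glue2p : Equiv.Perm (Fin (K + 1)) :=
  Equiv.ofBijective _ (Finite.injective_iff_bijective.mp (glue2_inj K m hm ρ τ2))

lemma glue2_ncf (hρ : NCF 0 m ρ) (hτ2 : NCF 1 (K - m) τ2) :
    NCF 1 (K + 1) (glue2p K m hm ρ τ2) := by
  intro p q hc
  have hc' : Cross' ((p : ℕ) + 1) (glue2 K m hm ρ τ2 p : ℕ)
      ((q : ℕ) + 1) (glue2 K m hm ρ τ2 q : ℕ) := hc
  rcases glue2_spec K m hm ρ τ2 p with ⟨a, ea, va⟩ | ⟨e0, v0⟩ | ⟨a, ea, va⟩ <;>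
    rcases glue2_spec K m hm ρ τ2 q with ⟨b, fb, wb⟩ | ⟨f0, w0⟩ | ⟨b, fb, wb⟩
  · exact hρ a b (by simp only [Cross'] at hc' ⊢; omega)
  · have := (ρ a).isLt; simp only [Cross'] at hc'; omega
  · have ha := (ρ a).isLt; have hb := (τ2 b).isLt; have := a.isLt
    simp only [Cross'] at hc'; omega
  · have := (ρ b).isLt; simp only [Cross'] at hc'; omega
  · simp only [Cross'] at hc'; omega
  · have := (τ2 b).isLt; simp only [Cross'] at hc'; omega
  · have := (ρ b).isLt; have := b.isLt; simp only [Cross'] at hc'; omega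
  · simp only [Cross'] at hc'; omega
  · exact hτ2 a b (by simp only [Cross'] at hc' ⊢; omega)

end Glue2

section Split2

lemma pigeon_high {N k : ℕ} (σ : Equiv.Perm (Fin N))
    (hmap : ∀ p : Fin N, k < (p : ℕ) → k < (σ p : ℕ)) :
    ∀ p : Fin N, (p : ℕ) < k → k < (σ p : ℕ) → False := by
  intro p hp hlt
  have hN : k < N := by have := p.isLt; omega
  have hcs := card_filter_interval N (k + 1) N (le_refl N)
  have hsurj := Finset.surj_on_of_inj_on_of_card_le
    (s := Finset.univ.filter (fun x : Fin N => k + 1 ≤ (x : ℕ) ∧ (x : ℕ) < N))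
    (t := Finset.univ.filter (fun x : Fin N => k + 1 ≤ (x : ℕ) ∧ (x : ℕ) < N))
    (fun a _ => σ a)
    (by
      intro a ha
      simp only [Finset.mem_filter, Finset.mem_univ, true_and] at ha ⊢
      have := hmap a (by omega)
      have := (σ a).isLt
      omega)
    (by intro a₁ a₂ _ _ h; exact σ.injective h)
    (le_refl _)
  obtain ⟨a, ha, hba⟩ := hsurj (σ p)
    (by
      simp only [Finset.mem_filter, Finset.mem_univ, true_and]
      have := (σ p).isLt
      omega)
  simp only [Finset.mem_filter, Finset.mem_univ, true_and] at ha
  have : p = a := σ.injective hba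
  omega

lemma split2 {K : ℕ} {τ : Equiv.Perm (Fin (K + 1))} (hτ : NCF 1 (K + 1) τ) :
    ∃ (m : Fin (K + 1)) (ρ : Equiv.Perm (Fin (m : ℕ)))
      (τ2 : Equiv.Perm (Fin (K - (m : ℕ)))),
      NCF 0 (m : ℕ) ρ ∧ NCF 1 (K - (m : ℕ)) τ2 ∧
      glue2p K (m : ℕ) (Nat.lt_succ_iff.mp m.isLt) ρ τ2 = τ := by
  classical
  set mm : ℕ := ((τ.symm ⟨0, Nat.succ_pos K⟩ : Fin (K + 1)) : ℕ) with hmm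
  have hmK : mm ≤ K := by have := (τ.symm ⟨0, Nat.succ_pos K⟩).isLt; omega
  have hmlt : mm < K + 1 := by omega
  have hz : (τ ⟨mm, hmlt⟩ : ℕ) = 0 :=
    congrArg Fin.val (τ.apply_symm_apply ⟨0, Nat.succ_pos K⟩)
  have em : ((⟨mm, hmlt⟩ : Fin (K + 1)) : ℕ) = mm := rfl
  have hzero : ∀ i : Fin (K + 1), (i : ℕ) ≠ mm → (τ i : ℕ) ≠ 0 := by
    intro i hi h
    have : i = ⟨mm, hmlt⟩ := τ.injective (Fin.ext (by omega))
    have := congrArg Fin.val this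
    omega
  -- positions after mm map above mm
  have T1 : ∀ i : Fin (K + 1), mm < (i : ℕ) → mm < (τ i : ℕ) := by
    intro i hi
    by_contra hle
    have hne := hzero i (by omega)
    exact hτ ⟨mm, hmlt⟩ i (Or.inr ⟨by omega, by omega, by omega⟩)
  -- positions before mm map into [1, mm]
  have T2 : ∀ i : Fin (K + 1), (i : ℕ) < mm → 1 ≤ (τ i : ℕ) ∧ (τ i : ℕ) ≤ mm := by
    intro i hi
    have hne := hzero i (by omega)
    constructor
    · omega
    · by_contra hgt
      exact pigeon_high τ T1 i hi (by omega)
  -- build ρ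
  have hbρ : ∀ a : Fin mm, (τ ⟨(a : ℕ), by have := a.isLt; omega⟩ : ℕ) - 1 < mm := by
    intro a
    have ha : (a : ℕ) < mm := a.isLt
    have hpa : (a : ℕ) < K + 1 := by omega
    have := T2 ⟨(a : ℕ), hpa⟩ (show ((⟨(a : ℕ), hpa⟩ : Fin (K + 1)) : ℕ) < mm from ha)
    omega
  have hinjρ : Function.Injective (fun a : Fin mm =>
      (⟨(τ ⟨(a : ℕ), by have := a.isLt; omega⟩ : ℕ) - 1, hbρ a⟩ : Fin mm)) := by
    intro a b h
    have h0 := congrArg Fin.val h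
    have hpa : (a : ℕ) < K + 1 := by have := a.isLt; omega
    have hpb : (b : ℕ) < K + 1 := by have := b.isLt; omega
    have h' : (τ ⟨(a : ℕ), hpa⟩ : ℕ) - 1 = (τ ⟨(b : ℕ), hpb⟩ : ℕ) - 1 := h0
    have ha := T2 ⟨(a : ℕ), hpa⟩ (show ((⟨(a : ℕ), hpa⟩ : Fin (K + 1)) : ℕ) < mm from a.isLt)
    have hb := T2 ⟨(b : ℕ), hpb⟩ (show ((⟨(b : ℕ), hpb⟩ : Fin (K + 1)) : ℕ) < mm from b.isLt)
    have h''' : (τ ⟨(a : ℕ), hpa⟩ : Fin (K + 1)) = τ ⟨(b : ℕ), hpb⟩ := Fin.ext (by omega)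
    have h4 := congrArg Fin.val (τ.injective h''')
    have h'' : (a : ℕ) = (b : ℕ) := h4
    exact Fin.ext h''
  -- build τ2
  have hbτ2 : ∀ a : Fin (K - mm),
      (τ ⟨(a : ℕ) + (mm + 1), by have := a.isLt; omega⟩ : ℕ) - (mm + 1) < K - mm := by
    intro a
    have ha : (a : ℕ) < K - mm := a.isLt
    have hpa : (a : ℕ) + (mm + 1) < K + 1 := by omega
    have h1 := T1 ⟨(a : ℕ) + (mm + 1), hpa⟩ (show mm < (a : ℕ) + (mm + 1) by omega)
    have h2 := (τ ⟨(a : ℕ) + (mm + 1), hpa⟩).isLt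
    have h3 : (τ ⟨(a : ℕ) + (mm + 1), by have := a.isLt; omega⟩ : ℕ)
        = (τ ⟨(a : ℕ) + (mm + 1), hpa⟩ : ℕ) := rfl
    omega
  have hT1τ2 : ∀ a : Fin (K - mm),
      mm < (τ ⟨(a : ℕ) + (mm + 1), by have := a.isLt; omega⟩ : ℕ) := by
    intro a
    have ha : (a : ℕ) < K - mm := a.isLt
    have hpa : (a : ℕ) + (mm + 1) < K + 1 := by omega
    exact T1 ⟨(a : ℕ) + (mm + 1), hpa⟩ (show mm < (a : ℕ) + (mm + 1) by omega)
  have hinjτ2 : Function.Injective (fun a : Fin (K - mm) =>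
      (⟨(τ ⟨(a : ℕ) + (mm + 1), by have := a.isLt; omega⟩ : ℕ) - (mm + 1), hbτ2 a⟩
        : Fin (K - mm))) := by
    intro a b h
    have h0 := congrArg Fin.val h
    have hpa : (a : ℕ) + (mm + 1) < K + 1 := by have := a.isLt; omega
    have hpb : (b : ℕ) + (mm + 1) < K + 1 := by have := b.isLt; omega
    have h' : (τ ⟨(a : ℕ) + (mm + 1), hpa⟩ : ℕ) - (mm + 1)
        = (τ ⟨(b : ℕ) + (mm + 1), hpb⟩ : ℕ) - (mm + 1) := h0
    have ha := hT1τ2 a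
    have hb := hT1τ2 b
    have h''' : (τ ⟨(a : ℕ) + (mm + 1), hpa⟩ : Fin (K + 1))
        = τ ⟨(b : ℕ) + (mm + 1), hpb⟩ := Fin.ext (by omega)
    have h'' : (a : ℕ) + (mm + 1) = (b : ℕ) + (mm + 1) := congrArg Fin.val (τ.injective h''')
    exact Fin.ext (by omega)
  refine ⟨⟨mm, hmlt⟩, permOfInj _ hinjρ, permOfInj _ hinjτ2, ?_, ?_, ?_⟩
  · -- NCF 0 mm ρ
    intro a b hc
    have ha : (a : ℕ) < mm := a.isLt
    have hb : (b : ℕ) < mm := b.isLt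
    have hpa : (a : ℕ) < K + 1 := by omega
    have hpb : (b : ℕ) < K + 1 := by omega
    have va : ((permOfInj _ hinjρ) a : ℕ) = (τ ⟨(a : ℕ), hpa⟩ : ℕ) - 1 := rfl
    have vb : ((permOfInj _ hinjρ) b : ℕ) = (τ ⟨(b : ℕ), hpb⟩ : ℕ) - 1 := rfl
    have ba := T2 ⟨(a : ℕ), hpa⟩ (show ((⟨(a : ℕ), hpa⟩ : Fin (K + 1)) : ℕ) < mm from ha)
    have bb := T2 ⟨(b : ℕ), hpb⟩ (show ((⟨(b : ℕ), hpb⟩ : Fin (K + 1)) : ℕ) < mm from hb)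
    have ea : ((⟨(a : ℕ), hpa⟩ : Fin (K + 1)) : ℕ) = (a : ℕ) := rfl
    have eb : ((⟨(b : ℕ), hpb⟩ : Fin (K + 1)) : ℕ) = (b : ℕ) := rfl
    exact hτ ⟨(a : ℕ), hpa⟩ ⟨(b : ℕ), hpb⟩ (by simp only [Cross'] at hc ⊢; omega)
  · -- NCF 1 (K - mm) τ2
    intro a b hc
    have ha : (a : ℕ) < K - mm := a.isLt
    have hb : (b : ℕ) < K - mm := b.isLt
    have hpa : (a : ℕ) + (mm + 1) < K + 1 := by omega
    have hpb : (b : ℕ) + (mm + 1) < K + 1 := by omega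
    have va : ((permOfInj _ hinjτ2) a : ℕ) = (τ ⟨(a : ℕ) + (mm + 1), hpa⟩ : ℕ) - (mm + 1) := rfl
    have vb : ((permOfInj _ hinjτ2) b : ℕ) = (τ ⟨(b : ℕ) + (mm + 1), hpb⟩ : ℕ) - (mm + 1) := rfl
    have ba : mm < (τ ⟨(a : ℕ) + (mm + 1), hpa⟩ : ℕ) := hT1τ2 a
    have bb : mm < (τ ⟨(b : ℕ) + (mm + 1), hpb⟩ : ℕ) := hT1τ2 b
    have ea : ((⟨(a : ℕ) + (mm + 1), hpa⟩ : Fin (K + 1)) : ℕ) = (a : ℕ) + (mm + 1) := rfl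
    have eb : ((⟨(b : ℕ) + (mm + 1), hpb⟩ : Fin (K + 1)) : ℕ) = (b : ℕ) + (mm + 1) := rfl
    exact hτ ⟨(a : ℕ) + (mm + 1), hpa⟩ ⟨(b : ℕ) + (mm + 1), hpb⟩
      (by simp only [Cross'] at hc ⊢; omega)
  · -- glue equals τ
    show glue2p K mm hmK (permOfInj _ hinjρ) (permOfInj _ hinjτ2) = τ
    apply Equiv.ext
    intro i
    apply Fin.ext
    show (glue2 K mm hmK (permOfInj _ hinjρ) (permOfInj _ hinjτ2) i : ℕ) = (τ i : ℕ)
    by_cases h1 : (i : ℕ) < mm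
    · have hpa : (i : ℕ) < K + 1 := i.isLt
      refine (glue2_val_low K mm hmK (permOfInj _ hinjρ) (permOfInj _ hinjτ2) i
        ⟨(i : ℕ), h1⟩ rfl).trans ?_
      refine Eq.trans (congrArg (fun x => x + 1)
        (show ((permOfInj _ hinjρ) ⟨(i : ℕ), h1⟩ : ℕ) = (τ ⟨(i : ℕ), hpa⟩ : ℕ) - 1
          from rfl)) ?_
      have hge := T2 ⟨(i : ℕ), hpa⟩ (show ((⟨(i : ℕ), hpa⟩ : Fin (K + 1)) : ℕ) < mm from h1)
      refine (Nat.sub_add_cancel hge.1).trans ?_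
      exact congrArg (fun x => ((τ x : Fin (K + 1)) : ℕ)) (Fin.ext rfl)
    by_cases h2 : (i : ℕ) = mm
    · refine (glue2_val_zero K mm hmK (permOfInj _ hinjρ) (permOfInj _ hinjτ2) i h2).trans ?_
      have : (⟨mm, hmlt⟩ : Fin (K + 1)) = i := Fin.ext (show mm = (i : ℕ) by omega)
      rw [← this]
      omega
    · have hip : (i : ℕ) - (mm + 1) < K - mm := by have := i.isLt; omega
      have hq : (i : ℕ) - (mm + 1) + (mm + 1) < K + 1 := by have := i.isLt; omega
      refine (glue2_val_high K mm hmK (permOfInj _ hinjρ) (permOfInj _ hinjτ2) i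
        ⟨(i : ℕ) - (mm + 1), hip⟩
        (show (i : ℕ) - (mm + 1) + (mm + 1) = (i : ℕ) by omega)).trans ?_
      refine Eq.trans (congrArg (fun x => x + (mm + 1))
        (show ((permOfInj _ hinjτ2) ⟨(i : ℕ) - (mm + 1), hip⟩ : ℕ)
          = (τ ⟨(i : ℕ) - (mm + 1) + (mm + 1), hq⟩ : ℕ) - (mm + 1) from rfl)) ?_
      have hge : mm + 1 ≤ (τ ⟨(i : ℕ) - (mm + 1) + (mm + 1), hq⟩ : ℕ) :=
        T1 ⟨(i : ℕ) - (mm + 1) + (mm + 1), hq⟩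
          (show mm < (i : ℕ) - (mm + 1) + (mm + 1) by omega)
      refine (Nat.sub_add_cancel hge).trans ?_
      exact congrArg (fun x => ((τ x : Fin (K + 1)) : ℕ))
        (Fin.ext (show (i : ℕ) - (mm + 1) + (mm + 1) = (i : ℕ) by omega))

end Split2

noncomputable def G2 (K : ℕ)
    (x : Σ m : Fin (K + 1), {ρ : Equiv.Perm (Fin (m : ℕ)) // NCF 0 (m : ℕ) ρ} ×
      {τ2 : Equiv.Perm (Fin (K - (m : ℕ))) // NCF 1 (K - (m : ℕ)) τ2}) :
    {τ : Equiv.Perm (Fin (K + 1)) // NCF 1 (K + 1) τ} :=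
  ⟨glue2p K (x.1 : ℕ) (Nat.lt_succ_iff.mp x.1.isLt) x.2.1.1 x.2.2.1,
    glue2_ncf K (x.1 : ℕ) _ _ _ x.2.1.2 x.2.2.2⟩

lemma G2_inj (K : ℕ) : Function.Injective (G2 K) := by
  intro x y h
  obtain ⟨m, ⟨ρ, hρ⟩, ⟨τ2, hτ2⟩⟩ := x
  obtain ⟨m', ⟨ρ', hρ'⟩, ⟨τ2', hτ2'⟩⟩ := y
  have hperm := congrArg Subtype.val h
  have hm : m = m' := by
    -- compare preimage of 0, i.e. the value 0's position: use values at positions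
    by_contra hne
    have hne' : (m : ℕ) ≠ (m' : ℕ) := fun hc => hne (Fin.ext hc)
    -- evaluate at position m
    have hv : ((glue2p K (m : ℕ) (Nat.lt_succ_iff.mp m.isLt) ρ τ2) ⟨(m : ℕ), m.isLt⟩ : ℕ)
        = ((glue2p K (m' : ℕ) (Nat.lt_succ_iff.mp m'.isLt) ρ' τ2') ⟨(m : ℕ), m.isLt⟩ : ℕ) :=
      congrArg (fun e : Equiv.Perm (Fin (K + 1)) =>
        ((e ⟨(m : ℕ), m.isLt⟩ : Fin (K + 1)) : ℕ)) hperm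
    have v1 : ((glue2p K (m : ℕ) (Nat.lt_succ_iff.mp m.isLt) ρ τ2) ⟨(m : ℕ), m.isLt⟩ : ℕ) = 0 :=
      glue2_val_zero K (m : ℕ) (Nat.lt_succ_iff.mp m.isLt) ρ τ2 _ rfl
    have hbridge : ((glue2p K (m' : ℕ) (Nat.lt_succ_iff.mp m'.isLt) ρ' τ2')
        ⟨(m : ℕ), m.isLt⟩ : ℕ)
        = (glue2 K (m' : ℕ) (Nat.lt_succ_iff.mp m'.isLt) ρ' τ2' ⟨(m : ℕ), m.isLt⟩ : ℕ) := rfl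
    have e1 : ((⟨(m : ℕ), m.isLt⟩ : Fin (K + 1)) : ℕ) = (m : ℕ) := rfl
    rcases glue2_spec K (m' : ℕ) (Nat.lt_succ_iff.mp m'.isLt) ρ' τ2' ⟨(m : ℕ), m.isLt⟩ with
      ⟨a, ea, va⟩ | ⟨e0, v0⟩ | ⟨a, ea, va⟩
    · omega
    · omega
    · omega
  subst hm
  have hρρ : ρ = ρ' := by
    apply Equiv.ext
    intro a
    have ha : (a : ℕ) < (m : ℕ) := a.isLt
    have hpa : (a : ℕ) < K + 1 := by have := m.isLt; omega
    have hv : ((glue2p K (m : ℕ) (Nat.lt_succ_iff.mp m.isLt) ρ τ2) ⟨(a : ℕ), hpa⟩ : ℕ)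
        = ((glue2p K (m : ℕ) (Nat.lt_succ_iff.mp m.isLt) ρ' τ2') ⟨(a : ℕ), hpa⟩ : ℕ) :=
      congrArg (fun e : Equiv.Perm (Fin (K + 1)) =>
        ((e ⟨(a : ℕ), hpa⟩ : Fin (K + 1)) : ℕ)) hperm
    have w1 : ((glue2p K (m : ℕ) (Nat.lt_succ_iff.mp m.isLt) ρ τ2) ⟨(a : ℕ), hpa⟩ : ℕ)
        = (ρ a : ℕ) + 1 := glue2_val_low K (m : ℕ) (Nat.lt_succ_iff.mp m.isLt) ρ τ2 _ a rfl
    have w2 : ((glue2p K (m : ℕ) (Nat.lt_succ_iff.mp m.isLt) ρ' τ2') ⟨(a : ℕ), hpa⟩ : ℕ)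
        = (ρ' a : ℕ) + 1 := glue2_val_low K (m : ℕ) (Nat.lt_succ_iff.mp m.isLt) ρ' τ2' _ a rfl
    exact Fin.ext (by omega)
  subst hρρ
  have hττ : τ2 = τ2' := by
    apply Equiv.ext
    intro a
    have ha : (a : ℕ) < K - (m : ℕ) := a.isLt
    have hpa : (a : ℕ) + ((m : ℕ) + 1) < K + 1 := by omega
    have hv : ((glue2p K (m : ℕ) (Nat.lt_succ_iff.mp m.isLt) ρ τ2) ⟨(a : ℕ) + ((m : ℕ) + 1), hpa⟩ : ℕ)
        = ((glue2p K (m : ℕ) (Nat.lt_succ_iff.mp m.isLt) ρ τ2') ⟨(a : ℕ) + ((m : ℕ) + 1), hpa⟩ : ℕ) :=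
      congrArg (fun e : Equiv.Perm (Fin (K + 1)) =>
        ((e ⟨(a : ℕ) + ((m : ℕ) + 1), hpa⟩ : Fin (K + 1)) : ℕ)) hperm
    have w1 : ((glue2p K (m : ℕ) (Nat.lt_succ_iff.mp m.isLt) ρ τ2)
        ⟨(a : ℕ) + ((m : ℕ) + 1), hpa⟩ : ℕ)
        = (τ2 a : ℕ) + ((m : ℕ) + 1) := glue2_val_high K (m : ℕ) (Nat.lt_succ_iff.mp m.isLt) ρ τ2 _ a rfl
    have w2 : ((glue2p K (m : ℕ) (Nat.lt_succ_iff.mp m.isLt) ρ τ2')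
        ⟨(a : ℕ) + ((m : ℕ) + 1), hpa⟩ : ℕ)
        = (τ2' a : ℕ) + ((m : ℕ) + 1) := glue2_val_high K (m : ℕ) (Nat.lt_succ_iff.mp m.isLt) ρ τ2' _ a rfl
    exact Fin.ext (by omega)
  subst hττ
  rfl

lemma G2_surj (K : ℕ) : Function.Surjective (G2 K) := by
  rintro ⟨τ, hτ⟩
  obtain ⟨m, ρ, τ2, hρ, hτ2, heq⟩ := split2 hτ
  exact ⟨⟨m, ⟨ρ, hρ⟩, ⟨τ2, hτ2⟩⟩, Subtype.ext heq⟩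

lemma DCnt_succ (K : ℕ) :
    DCnt (K + 1) = ∑ m ∈ Finset.range (K + 1), NCnt m * DCnt (K - m) := by
  have e1 : DCnt (K + 1) = Nat.card (Σ m : Fin (K + 1),
      {ρ : Equiv.Perm (Fin (m : ℕ)) // NCF 0 (m : ℕ) ρ} ×
      {τ2 : Equiv.Perm (Fin (K - (m : ℕ))) // NCF 1 (K - (m : ℕ)) τ2}) :=
    (Nat.card_congr (Equiv.ofBijective (G2 K) ⟨G2_inj K, G2_surj K⟩)).symm
  rw [e1, nat_card_sigma]
  rw [← Fin.sum_univ_eq_sum_range (fun m => NCnt m * DCnt (K - m)) (K + 1)]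
  congr 1
  funext m
  rw [Nat.card_prod]
  rfl

lemma main_count : ∀ n : ℕ, NCnt n = catalan n ∧ DCnt n = catalan n := by
  intro n
  induction n using Nat.strong_induction_on with
  | _ n ih =>
    match n with
    | 0 => exact ⟨NCnt_zero.trans catalan_zero.symm, DCnt_zero.trans catalan_zero.symm⟩
    | (m + 1) =>
      have hcat : catalan (m + 1) = ∑ k ∈ Finset.range (m + 1), catalan k * catalan (m - k) := by
        rw [catalan_succ]
        exact Fin.sum_univ_eq_sum_range (fun i => catalan i * catalan (m - i)) (m + 1)
      constructor
      · rw [NCnt_succ m, hcat]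
        apply Finset.sum_congr rfl
        intro k hk
        have hk' : k < m + 1 := Finset.mem_range.mp hk
        rw [(ih k (by omega)).2, (ih (m - k) (by omega)).1]
      · rw [DCnt_succ m, hcat]
        apply Finset.sum_congr rfl
        intro k hk
        have hk' : k < m + 1 := Finset.mem_range.mp hk
        rw [(ih k (by omega)).1, (ih (m - k) (by omega)).2]


lemma strictMono_fin_two {α} [Preorder α] {f : Fin 2 → α} (h : f 0 < f 1) : StrictMono f := by
  intro i j hij
  have hi := i.isLt; have hj := j.isLt
  have hij' : (i : ℕ) < (j : ℕ) := hij
  have h1 : i = 0 := Fin.ext (by omega)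
  have h2 : j = 1 := Fin.ext (by omega)
  rw [h1, h2]; exact h

lemma hasCrossing_iff (n : ℕ) (σ : Equiv.Perm (Fin n)) :
    HasCrossing n 2 σ ↔ ∃ i j : Fin n, Cross' i (σ i) j (σ j) := by
  constructor
  · rintro ⟨a, ⟨h1, h2, h3⟩ | ⟨h1, h2, h3⟩⟩
    · refine ⟨a 0, a 1, Or.inl ?_⟩
      have e1 : (a 0 : ℕ) < a 1 := h1 (show (0 : Fin 2) < 1 by decide)
      have e2 : (σ (a 0) : ℕ) < σ (a 1) := h2 (show (0 : Fin 2) < 1 by decide)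
      exact ⟨e1, h3 1 0, e2⟩
    · refine ⟨a 0, a 1, Or.inr ?_⟩
      have e1 : (a 0 : ℕ) < a 1 := h1 (show (0 : Fin 2) < 1 by decide)
      have e2 : (σ (a 0) : ℕ) < σ (a 1) := h2 (show (0 : Fin 2) < 1 by decide)
      exact ⟨e2, h3 1 0, e1⟩
  · rintro ⟨i, j, hc⟩
    refine ⟨![i, j], ?_⟩
    rcases hc with ⟨c1, c2, c3⟩ | ⟨c1, c2, c3⟩
    · left
      refine ⟨strictMono_fin_two ?_, strictMono_fin_two ?_, ?_⟩
      · show i < j; exact Fin.lt_def.mpr c1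
      · show σ (![i, j] 0) < σ (![i, j] 1)
        simp only [Matrix.cons_val_zero, Matrix.cons_val_one, Matrix.head_cons]
        exact Fin.lt_def.mpr c3
      · intro s t
        fin_cases s <;> fin_cases t <;>
          simp only [Fin.mk_zero, Fin.mk_one, Matrix.cons_val_zero, Matrix.cons_val_one, Matrix.head_cons] <;> omega
    · right
      refine ⟨strictMono_fin_two ?_, strictMono_fin_two ?_, ?_⟩
      · show i < j; exact Fin.lt_def.mpr c3
      · show σ (![i, j] 0) < σ (![i, j] 1)
        simp only [Matrix.cons_val_zero, Matrix.cons_val_one, Matrix.head_cons]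
        exact Fin.lt_def.mpr c1
      · intro s t
        fin_cases s <;> fin_cases t <;>
          simp only [Fin.mk_zero, Fin.mk_one, Matrix.cons_val_zero, Matrix.cons_val_one, Matrix.head_cons] <;> omega

lemma not_hasCrossing_iff (n : ℕ) (σ : Equiv.Perm (Fin n)) :
    ¬ HasCrossing n 2 σ ↔ NCF 0 n σ := by
  rw [hasCrossing_iff]
  push_neg
  constructor
  · intro h i j; simpa using h i j
  · intro h i j; simpa using h i j


end NCProof

/-- The number of non-crossing permutations of {1,…,n} is the n-th Catalan number. -/
theorem noncrossing_card_eq_catalan (n : ℕ) :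
    Nat.card {σ : Equiv.Perm (Fin n) // ¬ HasCrossing n 2 σ} = Nat.choose (2 * n) n / (n + 1) := by
  have h1 : Nat.card {σ : Equiv.Perm (Fin n) // ¬ HasCrossing n 2 σ} = NCnt n :=
    Nat.card_congr (Equiv.subtypeEquivRight (fun σ => not_hasCrossing_iff n σ))
  rw [h1, (main_count n).1, catalan_eq_centralBinom_div, Nat.centralBinom_eq_two_mul_choose]
end

section
/- For n = 2m+1 odd, the number of permutations of {1,…,n} whose arc diagram contains an (m+1)-nesting equals m!. -/
private lemma mono_gap {k n : ℕ} {f : Fin k → Fin n} (hf : StrictMono f) (d : ℕ) :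
    ∀ i j : Fin k, (i : ℕ) + d = (j : ℕ) → (f i : ℕ) + d ≤ (f j : ℕ) := by
  induction d with
  | zero =>
    intro i j h
    have : i = j := Fin.ext (by omega)
    subst this; omega
  | succ d ih =>
    intro i j h
    have hi1 : (i : ℕ) + 1 < k := by have := j.isLt; omega
    have h1 : f i < f ⟨(i:ℕ)+1, hi1⟩ := hf (by simp [Fin.lt_def])
    have h1' : (f i : ℕ) < (f ⟨(i:ℕ)+1, hi1⟩ : ℕ) := h1
    have h2 := ih ⟨(i:ℕ)+1, hi1⟩ j (by simp; omega)
    omega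

private lemma anti_gap {k n : ℕ} {f : Fin k → Fin n} (hf : StrictAnti f) (d : ℕ) :
    ∀ i j : Fin k, (i : ℕ) + d = (j : ℕ) → (f j : ℕ) + d ≤ (f i : ℕ) := by
  induction d with
  | zero =>
    intro i j h
    have : i = j := Fin.ext (by omega)
    subst this; omega
  | succ d ih =>
    intro i j h
    have hi1 : (i : ℕ) + 1 < k := by have := j.isLt; omega
    have h1 : f ⟨(i:ℕ)+1, hi1⟩ < f i := hf (by simp [Fin.lt_def])
    have h1' : (f ⟨(i:ℕ)+1, hi1⟩ : ℕ) < (f i : ℕ) := h1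
    have h2 := ih ⟨(i:ℕ)+1, hi1⟩ j (by simp; omega)
    omega

private def Pcond (m : ℕ) (σ : Equiv.Perm (Fin (2 * m + 1))) : Prop :=
  ∀ x : Fin (2 * m + 1), (x : ℕ) ≤ m → (σ x : ℕ) = 2 * m - x

set_option maxHeartbeats 1000000 in
private lemma hasNesting_iff (m : ℕ) (σ : Equiv.Perm (Fin (2 * m + 1))) :
    HasNesting (2 * m + 1) (m + 1) σ ↔ Pcond m σ := by
  constructor
  · rintro ⟨a, hup | hlow⟩
    · obtain ⟨ha, hg, hle⟩ := hup
      have h1 : (a ⟨0, by omega⟩ : ℕ) + m ≤ (a ⟨m, by omega⟩ : ℕ) :=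
        mono_gap ha m _ _ (by simp)
      have h2 : (σ (a ⟨m, by omega⟩) : ℕ) + m ≤ (σ (a ⟨0, by omega⟩) : ℕ) :=
        anti_gap hg m _ _ (by simp)
      have h3 := hle ⟨m, by omega⟩ ⟨m, by omega⟩
      have hb1 := (a ⟨0, by omega⟩).isLt
      have hb2 := (σ (a ⟨0, by omega⟩)).isLt
      intro x hx
      have hax1 : (a ⟨0, by omega⟩ : ℕ) + (x : ℕ) ≤ (a ⟨(x:ℕ), by omega⟩ : ℕ) :=
        mono_gap ha _ _ _ (by simp)
      have hax2 : (a ⟨(x:ℕ), by omega⟩ : ℕ) + (m - (x : ℕ)) ≤ (a ⟨m, by omega⟩ : ℕ) :=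
        mono_gap ha _ _ _ (by simp; omega)
      have hsx1 : (σ (a ⟨m, by omega⟩) : ℕ) + (m - (x : ℕ)) ≤ (σ (a ⟨(x:ℕ), by omega⟩) : ℕ) :=
        anti_gap hg _ _ _ (by simp; omega)
      have hsx2 : (σ (a ⟨(x:ℕ), by omega⟩) : ℕ) + (x : ℕ) ≤ (σ (a ⟨0, by omega⟩) : ℕ) :=
        anti_gap hg _ _ _ (by simp)
      have hax : a ⟨(x:ℕ), by omega⟩ = x := Fin.ext (by omega)
      rw [← hax]
      omega
    · exfalso
      obtain ⟨ha, hg, hlt⟩ := hlow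
      have h1 : (a ⟨0, by omega⟩ : ℕ) + m ≤ (a ⟨m, by omega⟩ : ℕ) :=
        mono_gap ha m _ _ (by simp)
      have h2 : (σ (a ⟨m, by omega⟩) : ℕ) + m ≤ (σ (a ⟨0, by omega⟩) : ℕ) :=
        anti_gap hg m _ _ (by simp)
      have h3 := hlt ⟨0, by omega⟩ ⟨0, by omega⟩
      have hb1 := (a ⟨m, by omega⟩).isLt
      have hb2 := (σ (a ⟨0, by omega⟩)).isLt
      omega
  · intro hP
    refine ⟨fun i => ⟨(i : ℕ), by have := i.isLt; omega⟩, Or.inl ⟨?_, ?_, ?_⟩⟩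
    · intro i j hij
      exact hij
    · intro i j hij
      have hvi : (σ (⟨(i : ℕ), by have := i.isLt; omega⟩ : Fin (2*m+1)) : ℕ) = 2 * m - (i : ℕ) :=
        hP _ (by simp; have := i.isLt; omega)
      have hvj : (σ (⟨(j : ℕ), by have := j.isLt; omega⟩ : Fin (2*m+1)) : ℕ) = 2 * m - (j : ℕ) :=
        hP _ (by simp; have := j.isLt; omega)
      have hji := j.isLt
      simp only [Fin.lt_def]
      rw [hvi, hvj]
      have := Fin.lt_def.mp hij
      omega
    · intro i j
      have hvj : (σ (⟨(j : ℕ), by have := j.isLt; omega⟩ : Fin (2*m+1)) : ℕ) = 2 * m - (j : ℕ) :=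
        hP _ (by simp; have := j.isLt; omega)
      rw [hvj]
      have := i.isLt
      have := j.isLt
      simp
      omega

private lemma Pfix {m : ℕ} {σ : Equiv.Perm (Fin (2 * m + 1))} (hσ : Pcond m σ)
    {x : Fin (2 * m + 1)} (hx : (x : ℕ) ≤ m) : (σ.trans Fin.revPerm) x = x := by
  have h1 : (σ x : ℕ) = 2 * m - (x : ℕ) := hσ x hx
  apply Fin.ext
  simp [Fin.rev, h1]
  omega

private lemma Ppres {m : ℕ} {σ : Equiv.Perm (Fin (2 * m + 1))} (hσ : Pcond m σ) :
    ∀ x : Fin (2 * m + 1), m < (x : ℕ) ↔ m < (((σ.trans Fin.revPerm) x : Fin (2*m+1)) : ℕ) := by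
  intro x
  constructor
  · intro hx
    by_contra hnx
    push_neg at hnx
    have h1 : (σ.trans Fin.revPerm) ((σ.trans Fin.revPerm) x) = (σ.trans Fin.revPerm) x :=
      Pfix hσ hnx
    have h2 : (σ.trans Fin.revPerm) x = x := (σ.trans Fin.revPerm).injective h1
    omega
  · intro hx
    by_contra hnx
    push_neg at hnx
    have h1 : (σ.trans Fin.revPerm) x = x := Pfix hσ hnx
    rw [h1] at hx
    omega

private def Aperm (m : ℕ) (σ : {σ : Equiv.Perm (Fin (2 * m + 1)) // Pcond m σ}) :
    Equiv.Perm {x : Fin (2 * m + 1) // m < (x : ℕ)} :=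
  Equiv.Perm.subtypePerm (σ.1.trans Fin.revPerm) (fun x => (Ppres σ.2 x).symm)

private lemma Aperm_val (m : ℕ) (σ : {σ : Equiv.Perm (Fin (2 * m + 1)) // Pcond m σ})
    (x : {x : Fin (2 * m + 1) // m < (x : ℕ)}) :
    ((Aperm m σ x : {x : Fin (2 * m + 1) // m < (x : ℕ)}) : Fin (2 * m + 1))
      = (σ.1.trans Fin.revPerm) x.1 := rfl

private def gEquiv (m : ℕ) : {x : Fin (2 * m + 1) // m < (x : ℕ)} ≃ Fin m where
  toFun x := ⟨(x : ℕ) - (m + 1), by have := x.1.isLt; have := x.2; omega⟩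
  invFun b := ⟨⟨m + 1 + (b : ℕ), by have := b.isLt; omega⟩, by show m < m + 1 + (b:ℕ); omega⟩
  left_inv x := by
    rcases x with ⟨⟨v, hv⟩, hx⟩
    simp at hx ⊢
    omega
  right_inv b := by
    rcases b with ⟨v, hv⟩
    simp

private lemma card_P (m : ℕ) :
    Nat.card {σ : Equiv.Perm (Fin (2 * m + 1)) // Pcond m σ} = Nat.factorial m := by
  classical
  have hAinj : Function.Injective (Aperm m) := by
    intro σ τ h
    apply Subtype.ext
    apply Equiv.ext
    intro x
    by_cases hx : m < (x : ℕ)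
    · have h1 : Aperm m σ ⟨x, hx⟩ = Aperm m τ ⟨x, hx⟩ := by rw [h]
      have h2 : (σ.1.trans Fin.revPerm) x = (τ.1.trans Fin.revPerm) x := by
        rw [← Aperm_val m σ ⟨x, hx⟩, ← Aperm_val m τ ⟨x, hx⟩, h1]
      exact Fin.revPerm.injective h2
    · push_neg at hx
      apply Fin.ext
      rw [σ.2 x hx, τ.2 x hx]
  have hAsurj : Function.Surjective (Aperm m) := by
    intro κ
    have hPσ : Pcond m ((Equiv.Perm.ofSubtype κ).trans Fin.revPerm) := by
      intro x hx
      have h1 : Equiv.Perm.ofSubtype κ x = x :=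
        Equiv.Perm.ofSubtype_apply_of_not_mem κ (by simp; omega)
      show ((Fin.revPerm (Equiv.Perm.ofSubtype κ x) : Fin (2*m+1)) : ℕ) = 2 * m - (x : ℕ)
      rw [h1]
      simp [Fin.rev]
    refine ⟨⟨(Equiv.Perm.ofSubtype κ).trans Fin.revPerm, hPσ⟩, ?_⟩
    apply Equiv.ext
    rintro ⟨x, hx⟩
    apply Subtype.ext
    rw [Aperm_val]
    have h1 : Equiv.Perm.ofSubtype κ x = κ ⟨x, hx⟩ :=
      Equiv.Perm.ofSubtype_apply_of_mem κ hx
    show Fin.revPerm (Fin.revPerm (Equiv.Perm.ofSubtype κ x)) = _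
    rw [h1]
    simp
  have hB : Function.Bijective (((gEquiv m).permCongr) ∘ (Aperm m)) :=
    (((gEquiv m).permCongr).bijective).comp ⟨hAinj, hAsurj⟩
  rw [Nat.card_eq_of_bijective _ hB, Nat.card_eq_fintype_card, Fintype.card_perm,
    Fintype.card_fin]

/-- For odd n = 2m+1, the number of permutations containing an (m+1)-nesting is m!. -/
theorem max_nesting_count_odd (m : ℕ) :
    Nat.card {σ : Equiv.Perm (Fin (2 * m + 1)) // HasNesting (2 * m + 1) (m + 1) σ}
      = Nat.factorial m := by
  rw [Nat.card_congr (Equiv.subtypeEquivRight (fun σ => hasNesting_iff m σ))]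
  exact card_P m
end

section
/- For every n, the number of permutations of {1,…,n} containing a maximum crossing (a ⌈n/2⌉-crossing) equals the number of permutations containing a maximum nesting (a ⌈n/2⌉-nesting). -/
namespace MCN

lemma gap_mono {k N : ℕ} {g : Fin k → Fin N} (hg : StrictMono g) :
    ∀ d : ℕ, ∀ i j : Fin k, (j : ℕ) = (i : ℕ) + d → (g i : ℕ) + d ≤ g j := by
  intro d
  induction d with
  | zero =>
    intro i j h
    have : i = j := Fin.ext (by omega)
    subst this; omega
  | succ d ih =>
    intro i j h
    have hj' : (i : ℕ) + d < k := by omega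
    have h1 := ih i ⟨(i : ℕ) + d, hj'⟩ rfl
    have h2 : g ⟨(i : ℕ) + d, hj'⟩ < g j := hg (by simp [Fin.lt_def]; omega)
    have h3 : (g ⟨(i : ℕ) + d, hj'⟩ : ℕ) < g j := h2
    omega

lemma gap_anti {k N : ℕ} {g : Fin k → Fin N} (hg : StrictAnti g) :
    ∀ d : ℕ, ∀ i j : Fin k, (j : ℕ) = (i : ℕ) + d → (g j : ℕ) + d ≤ g i := by
  intro d
  induction d with
  | zero =>
    intro i j h
    have : i = j := Fin.ext (by omega)
    subst this; omega
  | succ d ih =>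
    intro i j h
    have hj' : (i : ℕ) + d < k := by omega
    have h1 := ih i ⟨(i : ℕ) + d, hj'⟩ rfl
    have h2 : g j < g ⟨(i : ℕ) + d, hj'⟩ := hg (by simp [Fin.lt_def]; omega)
    have h3 : (g j : ℕ) < g ⟨(i : ℕ) + d, hj'⟩ := h2
    omega

def mkInvo {N : ℕ} (f : Fin N → Fin N) (h : ∀ x, f (f x) = x) : Equiv.Perm (Fin N) :=
  ⟨f, f, h, h⟩

@[simp] lemma mkInvo_apply {N : ℕ} (f : Fin N → Fin N) (h) (x : Fin N) :
    mkInvo f h x = f x := rfl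

section Odd
variable (m : ℕ)

def rhoOdd : Equiv.Perm (Fin (2*m+1)) :=
  mkInvo (fun j => if h : (j : ℕ) ≤ m then ⟨m - j, by omega⟩ else j) (by
    intro x
    by_cases h : (x : ℕ) ≤ m
    · simp only [h, dif_pos]
      have : m - (x:ℕ) ≤ m := by omega
      simp only [this, dif_pos]
      exact Fin.ext (by simp; omega)
    · simp only [h, dif_neg, not_false_iff])

lemma oddCross (σ : Equiv.Perm (Fin (2*m+1))) :
    HasCrossing (2*m+1) (m+1) σ ↔ ∀ i : Fin (2*m+1), (i : ℕ) ≤ m → (σ i : ℕ) = m + i := by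
  constructor
  · rintro ⟨a, ⟨ha, hb, hab⟩ | ⟨ha, hb, hab⟩⟩
    · have last : Fin (m+1) := ⟨m, by omega⟩
      have key1 : (m : ℕ) ≤ a ⟨m, by omega⟩ := by
        have := gap_mono ha m ⟨0, by omega⟩ ⟨m, by omega⟩ (by simp)
        omega
      have key2 : ((σ (a ⟨0, by omega⟩) : ℕ)) + m ≤ (σ (a ⟨m, by omega⟩) : ℕ) := by
        have := gap_mono hb m ⟨0, by omega⟩ ⟨m, by omega⟩ (by simp)
        exact this
      have key3 : (σ (a ⟨m, by omega⟩) : ℕ) < 2*m+1 := (σ (a _)).isLt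
      have key4 : (a ⟨m, by omega⟩ : ℕ) ≤ σ (a ⟨0, by omega⟩) := hab _ _
      have hlast : (a ⟨m, by omega⟩ : ℕ) = m := by omega
      have hs0 : (σ (a ⟨0, by omega⟩) : ℕ) = m := by omega
      intro i hi
      have hi' : (i : ℕ) < m + 1 := by omega
      have hai : a ⟨(i:ℕ), hi'⟩ = i := by
        have h1 := gap_mono ha ((i:ℕ)) ⟨0, by omega⟩ ⟨(i:ℕ), hi'⟩ (by simp)
        have h2 := gap_mono ha (m - (i:ℕ)) ⟨(i:ℕ), hi'⟩ ⟨m, by omega⟩ (by simp; omega)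
        exact Fin.ext (by omega)
      have h1 := gap_mono hb ((i:ℕ)) ⟨0, by omega⟩ ⟨(i:ℕ), hi'⟩ (by simp)
      have h2 := gap_mono hb (m - (i:ℕ)) ⟨(i:ℕ), hi'⟩ ⟨m, by omega⟩ (by simp; omega)
      rw [hai] at h1 h2
      omega
    · exfalso
      have h1 := gap_mono ha m ⟨0, by omega⟩ ⟨m, by omega⟩ (by simp)
      have h2 := gap_mono hb m ⟨0, by omega⟩ ⟨m, by omega⟩ (by simp)
      have h3 : (σ (a ⟨m, by omega⟩) : ℕ) < a ⟨0, by omega⟩ := hab _ _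
      have h4 : (a ⟨m, by omega⟩ : ℕ) < 2*m+1 := (a _).isLt
      omega
  · intro h
    refine ⟨fun i => ⟨(i : ℕ), by omega⟩, Or.inl ⟨?_, ?_, ?_⟩⟩
    · intro i j hij
      simp only [Fin.mk_lt_mk]
      exact hij
    · intro i j hij
      have hi := h ⟨(i:ℕ), by omega⟩ (by simp only [Fin.val_mk]; omega)
      have hj := h ⟨(j:ℕ), by omega⟩ (by simp only [Fin.val_mk]; omega)
      have hij' : (i:ℕ) < (j:ℕ) := hij
      simp only [Fin.lt_def, Fin.val_mk] at hi hj ⊢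
      omega
    · intro i j
      have hj := h ⟨(j:ℕ), by omega⟩ (by simp only [Fin.val_mk]; omega)
      simp only [Fin.val_mk] at hj ⊢
      omega

lemma oddNest (σ : Equiv.Perm (Fin (2*m+1))) :
    HasNesting (2*m+1) (m+1) σ ↔ ∀ i : Fin (2*m+1), (i : ℕ) ≤ m → (σ i : ℕ) + i = 2*m := by
  constructor
  · rintro ⟨a, ⟨ha, hb, hab⟩ | ⟨ha, hb, hab⟩⟩
    · have key1 : (m : ℕ) ≤ a ⟨m, by omega⟩ := by
        have := gap_mono ha m ⟨0, by omega⟩ ⟨m, by omega⟩ (by simp)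
        omega
      have key2 : ((σ (a ⟨m, by omega⟩) : ℕ)) + m ≤ (σ (a ⟨0, by omega⟩) : ℕ) := by
        have := gap_anti hb m ⟨0, by omega⟩ ⟨m, by omega⟩ (by simp)
        exact this
      have key3 : (σ (a ⟨0, by omega⟩) : ℕ) < 2*m+1 := (σ (a _)).isLt
      have key4 : (a ⟨m, by omega⟩ : ℕ) ≤ σ (a ⟨m, by omega⟩) := hab _ _
      have hlast : (a ⟨m, by omega⟩ : ℕ) = m := by omega
      intro i hi
      have hi' : (i : ℕ) < m + 1 := by omega
      have hai : a ⟨(i:ℕ), hi'⟩ = i := by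
        have h1 := gap_mono ha ((i:ℕ)) ⟨0, by omega⟩ ⟨(i:ℕ), hi'⟩ (by simp)
        have h2 := gap_mono ha (m - (i:ℕ)) ⟨(i:ℕ), hi'⟩ ⟨m, by omega⟩ (by simp; omega)
        exact Fin.ext (by omega)
      have h1 := gap_anti hb ((i:ℕ)) ⟨0, by omega⟩ ⟨(i:ℕ), hi'⟩ (by simp)
      have h2 := gap_anti hb (m - (i:ℕ)) ⟨(i:ℕ), hi'⟩ ⟨m, by omega⟩ (by simp; omega)
      rw [hai] at h1 h2
      omega
    · exfalso
      have h1 := gap_mono ha m ⟨0, by omega⟩ ⟨m, by omega⟩ (by simp)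
      have h2 := gap_anti hb m ⟨0, by omega⟩ ⟨m, by omega⟩ (by simp)
      have h3 : (σ (a ⟨0, by omega⟩) : ℕ) < a ⟨0, by omega⟩ := hab _ _
      have h4 : (a ⟨m, by omega⟩ : ℕ) < 2*m+1 := (a _).isLt
      omega
  · intro h
    refine ⟨fun i => ⟨(i : ℕ), by omega⟩, Or.inl ⟨?_, ?_, ?_⟩⟩
    · intro i j hij
      simp only [Fin.mk_lt_mk]
      exact hij
    · intro i j hij
      have hi := h ⟨(i:ℕ), by omega⟩ (by simp only [Fin.val_mk]; omega)
      have hj := h ⟨(j:ℕ), by omega⟩ (by simp only [Fin.val_mk]; omega)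
      have hij' : (i:ℕ) < (j:ℕ) := hij
      simp only [Fin.lt_def, Fin.val_mk] at hi hj ⊢
      omega
    · intro i j
      have hi := h ⟨(i:ℕ), by omega⟩ (by simp only [Fin.val_mk]; omega)
      have hj := h ⟨(j:ℕ), by omega⟩ (by simp only [Fin.val_mk]; omega)
      simp only [Fin.val_mk] at hi hj ⊢
      omega

lemma card_odd :
    Nat.card {σ : Equiv.Perm (Fin (2*m+1)) // HasCrossing (2*m+1) (m+1) σ}
      = Nat.card {σ : Equiv.Perm (Fin (2*m+1)) // HasNesting (2*m+1) (m+1) σ} := by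
  apply Nat.card_congr
  refine (Equiv.mulRight (rhoOdd m)).subtypeEquiv (fun σ => ?_)
  simp only [Equiv.coe_mulRight]
  rw [oddCross, oddNest]
  constructor
  · intro h i hi
    have : ((σ * rhoOdd m) i : ℕ) = (σ ⟨m - (i:ℕ), by omega⟩ : ℕ) := by
      simp only [Equiv.Perm.mul_apply, rhoOdd, mkInvo_apply, hi, dif_pos]
    rw [this, h ⟨m - (i:ℕ), by omega⟩ (by simp only [Fin.val_mk]; omega)]
    simp only [Fin.val_mk]; omega
  · intro h i hi
    have h2 := h ⟨m - (i:ℕ), by omega⟩ (by simp only [Fin.val_mk]; omega)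
    have : ((σ * rhoOdd m) ⟨m - (i:ℕ), by omega⟩ : ℕ) = (σ i : ℕ) := by
      simp only [Equiv.Perm.mul_apply, rhoOdd, mkInvo_apply]
      have hle : m - (i:ℕ) ≤ m := by omega
      simp only [hle, dif_pos]
      congr 1
      exact congrArg σ (Fin.ext (by simp only [Fin.val_mk]; omega))
    rw [this] at h2
    simp only [Fin.val_mk] at h2 ⊢
    omega

end Odd
section Even
variable (m : ℕ)

def PA (σ : Equiv.Perm (Fin (2*m))) : Prop :=
  (∀ i j : Fin (2*m), (i:ℕ) < (j:ℕ) → (j:ℕ) < m → (σ i:ℕ) < (σ j:ℕ)) ∧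
  (∀ i : Fin (2*m), (i:ℕ) = 0 → m ≤ (σ i:ℕ) + 1)

def PBW (x : ℕ) (σ : Equiv.Perm (Fin (2*m))) : Prop :=
  (∀ i : Fin (2*m), (i:ℕ) ≤ m → (i:ℕ) ≠ x → m ≤ (σ i:ℕ)) ∧
  (∀ i j : Fin (2*m), (i:ℕ) < (j:ℕ) → (j:ℕ) ≤ m → (i:ℕ) ≠ x → (j:ℕ) ≠ x → (σ i:ℕ) < (σ j:ℕ))

def PB (σ : Equiv.Perm (Fin (2*m))) : Prop := ∃ x, x ≤ m ∧ PBW m x σ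

def PL (σ : Equiv.Perm (Fin (2*m))) : Prop :=
  ∀ i : Fin (2*m), m ≤ (i:ℕ) → (σ i:ℕ) + m = (i:ℕ)

def QA (σ : Equiv.Perm (Fin (2*m))) : Prop :=
  (∀ i j : Fin (2*m), (i:ℕ) < (j:ℕ) → (j:ℕ) < m → (σ j:ℕ) < (σ i:ℕ)) ∧
  (∀ i : Fin (2*m), (i:ℕ) = m - 1 → m ≤ (σ i:ℕ) + 1)

def QBW (x : ℕ) (σ : Equiv.Perm (Fin (2*m))) : Prop :=
  (∀ i : Fin (2*m), (i:ℕ) ≤ m → (i:ℕ) ≠ x → m ≤ (σ i:ℕ)) ∧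
  (∀ i j : Fin (2*m), (i:ℕ) < (j:ℕ) → (j:ℕ) ≤ m → (i:ℕ) ≠ x → (j:ℕ) ≠ x → (σ j:ℕ) < (σ i:ℕ))

def QB (σ : Equiv.Perm (Fin (2*m))) : Prop := ∃ x, x ≤ m ∧ QBW m x σ

def QL (σ : Equiv.Perm (Fin (2*m))) : Prop :=
  ∀ i : Fin (2*m), m ≤ (i:ℕ) → (σ i:ℕ) + (i:ℕ) + 1 = 2*m

variable {m}

/-- From a strictly monotone `a : Fin m → Fin (2m)` whose max value is `m`,
extract the missing value `x ≤ m` and a coverage fact. -/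
lemma missing_val {a : Fin m → Fin (2*m)} (hm : 1 ≤ m) (ha : StrictMono a)
    (hbound : ∀ i, (a i : ℕ) ≤ m) :
    ∃ x ≤ m, (∀ i, (a i : ℕ) ≠ x) ∧
      (∀ p : Fin (2*m), (p:ℕ) ≤ m → (p:ℕ) ≠ x → ∃ i, a i = p) := by
  classical
  have hinj : Function.Injective (fun i : Fin m => (a i : ℕ)) := by
    intro i j hij
    exact ha.injective (Fin.ext hij)
  set S : Finset ℕ := Finset.image (fun i : Fin m => (a i : ℕ)) Finset.univ with hS
  have hcardS : S.card = m := by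
    rw [hS, Finset.card_image_of_injective _ hinj, Finset.card_univ, Fintype.card_fin]
  have hsub : S ⊆ Finset.range (m+1) := by
    intro y hy
    simp only [hS, Finset.mem_image, Finset.mem_univ, true_and] at hy
    obtain ⟨i, rfl⟩ := hy
    simp only [Finset.mem_range]
    have := hbound i
    omega
  have hne : (Finset.range (m+1) \ S).Nonempty := by
    rw [← Finset.card_pos, Finset.card_sdiff_of_subset hsub, Finset.card_range, hcardS]
    omega
  obtain ⟨x, hx⟩ := hne
  rw [Finset.mem_sdiff, Finset.mem_range] at hx
  refine ⟨x, by omega, ?_, ?_⟩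
  · intro i hcon
    exact hx.2 (by rw [← hcon]; exact Finset.mem_image_of_mem _ (Finset.mem_univ i))
  · intro p hp hpx
    have hSer : S = (Finset.range (m+1)).erase x := by
      apply Finset.eq_of_subset_of_card_le
      · intro y hy
        exact Finset.mem_erase.mpr ⟨fun h => hx.2 (h ▸ hy), hsub hy⟩
      · rw [Finset.card_erase_of_mem (Finset.mem_range.mpr (by omega)), Finset.card_range, hcardS]
        omega
    have hpS : (p:ℕ) ∈ S := by
      rw [hSer]
      exact Finset.mem_erase.mpr ⟨hpx, Finset.mem_range.mpr (by omega)⟩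
    rw [hS] at hpS
    simp only [Finset.mem_image, Finset.mem_univ, true_and] at hpS
    obtain ⟨i, hi⟩ := hpS
    exact ⟨i, Fin.ext hi⟩

lemma upper_cross_imp (hm : 1 ≤ m) (σ : Equiv.Perm (Fin (2*m)))
    {a : Fin m → Fin (2*m)} (h : IsUpperCrossing (2*m) m σ a) :
    PA m σ ∨ PB m σ := by
  obtain ⟨ha, hb, hab⟩ := h
  have hm1 : m - 1 < m := by omega
  have h0m : 0 < m := hm
  have h2 := gap_mono hb (m-1) ⟨0, h0m⟩ ⟨m-1, hm1⟩ (by simp only [Fin.val_mk]; omega)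
  have h3 : (σ (a ⟨m-1, hm1⟩) : ℕ) < 2*m := (σ (a _)).isLt
  have h4 : (a ⟨m-1, hm1⟩ : ℕ) ≤ σ (a ⟨0, h0m⟩) := hab _ _
  have hup : ∀ i : Fin m, (a i : ℕ) + (m - 1 - (i:ℕ)) ≤ (a ⟨m-1, hm1⟩ : ℕ) := by
    intro i
    have := gap_mono ha (m-1-(i:ℕ)) i ⟨m-1, hm1⟩ (by simp only [Fin.val_mk]; omega)
    omega
  have hlo : ∀ i : Fin m, (i:ℕ) ≤ (a i : ℕ) := by
    intro i
    have := gap_mono ha ((i:ℕ)) ⟨0, h0m⟩ i (by simp only [Fin.val_mk]; omega)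
    omega
  by_cases hc : (a ⟨m-1, hm1⟩ : ℕ) = m
  · right
    have hbound : ∀ i, (a i : ℕ) ≤ m := by
      intro i
      have h5 := hup i
      omega
    obtain ⟨x, hxm, hmiss, hcov⟩ := missing_val hm ha hbound
    refine ⟨x, hxm, ?_, ?_⟩
    · intro i hi hix
      obtain ⟨t, rfl⟩ := hcov i hi hix
      have h5 : (a ⟨m-1, hm1⟩ : ℕ) ≤ σ (a t) := hab _ _
      omega
    · intro i j hij hj hix hjx
      obtain ⟨s, rfl⟩ := hcov i (by omega) hix
      obtain ⟨t, rfl⟩ := hcov j hj hjx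
      have hst : s < t := ha.lt_iff_lt.mp (Fin.lt_def.mpr hij)
      exact Fin.lt_def.mp (hb hst)
  · left
    have hai : ∀ i : Fin m, (a i : ℕ) = (i:ℕ) := by
      intro i
      have h5 := hup i
      have h6 := hlo i
      have h7 := hlo ⟨m-1, hm1⟩
      have hil : (i:ℕ) ≤ m - 1 := by omega
      omega
    constructor
    · intro i j hij hjm
      have hii : (i:ℕ) < m := by omega
      have e1 : a ⟨(i:ℕ), hii⟩ = i := Fin.ext (by rw [hai])
      have e2 : a ⟨(j:ℕ), hjm⟩ = j := Fin.ext (by rw [hai])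
      have h8 : σ (a ⟨(i:ℕ), hii⟩) < σ (a ⟨(j:ℕ), hjm⟩) := hb (by simp only [Fin.mk_lt_mk]; exact hij)
      rw [e1, e2] at h8
      exact Fin.lt_def.mp h8
    · intro i hi0
      have e1 : a ⟨0, h0m⟩ = i := Fin.ext (by rw [hai]; exact hi0.symm)
      rw [e1] at h4
      have h9 : m - 1 ≤ (a ⟨m-1, hm1⟩ : ℕ) := by
        have := hlo ⟨m-1, hm1⟩
        simpa using this
      omega

lemma lower_cross_imp (hm : 1 ≤ m) (σ : Equiv.Perm (Fin (2*m)))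
    {a : Fin m → Fin (2*m)} (h : IsLowerCrossing (2*m) m σ a) :
    PL m σ := by
  obtain ⟨ha, hb, hab⟩ := h
  have hm1 : m - 1 < m := by omega
  have h0m : 0 < m := hm
  have h1 := gap_mono ha (m-1) ⟨0, h0m⟩ ⟨m-1, hm1⟩ (by simp only [Fin.val_mk]; omega)
  have h2 := gap_mono hb (m-1) ⟨0, h0m⟩ ⟨m-1, hm1⟩ (by simp only [Fin.val_mk]; omega)
  have h3 : (σ (a ⟨m-1, hm1⟩) : ℕ) < a ⟨0, h0m⟩ := hab _ _
  have h4 : (a ⟨m-1, hm1⟩ : ℕ) < 2*m := (a _).isLt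
  have ha0 : (a ⟨0, h0m⟩ : ℕ) = m := by omega
  have hai : ∀ i : Fin m, (a i : ℕ) = m + (i:ℕ) := by
    intro i
    have hl := gap_mono ha ((i:ℕ)) ⟨0, h0m⟩ i (by simp only [Fin.val_mk]; omega)
    have hu := gap_mono ha (m-1-(i:ℕ)) i ⟨m-1, hm1⟩ (by simp only [Fin.val_mk]; omega)
    omega
  have hsi : ∀ i : Fin m, (σ (a i) : ℕ) = (i:ℕ) := by
    intro i
    have hl := gap_mono hb ((i:ℕ)) ⟨0, h0m⟩ i (by simp only [Fin.val_mk]; omega)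
    have hu := gap_mono hb (m-1-(i:ℕ)) i ⟨m-1, hm1⟩ (by simp only [Fin.val_mk]; omega)
    omega
  intro p hp
  have hpm : (p:ℕ) - m < m := by omega
  have e1 : a ⟨(p:ℕ) - m, hpm⟩ = p := Fin.ext (by rw [hai]; simp only [Fin.val_mk]; omega)
  have h6 := hsi ⟨(p:ℕ) - m, hpm⟩
  rw [e1] at h6
  simp only [Fin.val_mk] at h6
  omega

lemma PA_imp_cross (hm : 1 ≤ m) (σ : Equiv.Perm (Fin (2*m))) (h : PA m σ) :
    HasCrossing (2*m) m σ := by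
  obtain ⟨h1, h2⟩ := h
  have h0m : 0 < 2*m := by omega
  have hs0 : m ≤ (σ ⟨0, h0m⟩ : ℕ) + 1 := h2 _ rfl
  have hbmono : StrictMono (fun i : Fin m => σ (⟨(i:ℕ), by omega⟩ : Fin (2*m))) := by
    intro i j hij
    have hij' : (i:ℕ) < (j:ℕ) := hij
    exact Fin.lt_def.mpr (h1 _ _ (by simp only [Fin.val_mk]; exact hij')
      (by simp only [Fin.val_mk]; omega))
  refine ⟨fun i => ⟨(i:ℕ), by omega⟩, Or.inl ⟨?_, hbmono, ?_⟩⟩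
  · intro i j hij
    simp only [Fin.mk_lt_mk]
    exact hij
  · intro i j
    have hg := gap_mono hbmono ((j:ℕ)) ⟨0, hm⟩ j (by simp only [Fin.val_mk]; omega)
    have hz : (σ (⟨((⟨0, hm⟩ : Fin m) : ℕ), by omega⟩ : Fin (2*m)) : ℕ) = (σ ⟨0, h0m⟩ : ℕ) := rfl
    simp only [Fin.val_mk] at hg ⊢
    have hi := i.isLt
    omega

lemma PB_imp_cross (hm : 1 ≤ m) (σ : Equiv.Perm (Fin (2*m))) (h : PB m σ) :
    HasCrossing (2*m) m σ := by
  obtain ⟨x, hxm, hlow, hinc⟩ := h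
  have hsa : ∀ i : Fin m, (if (i:ℕ) < x then (i:ℕ) else (i:ℕ)+1) < 2*m := by
    intro i
    have := i.isLt
    split <;> omega
  have hval : ∀ i : Fin m,
      ((⟨if (i:ℕ) < x then (i:ℕ) else (i:ℕ)+1, hsa i⟩ : Fin (2*m)) : ℕ)
        = if (i:ℕ) < x then (i:ℕ) else (i:ℕ)+1 := fun i => rfl
  have hsale : ∀ i : Fin m, (if (i:ℕ) < x then (i:ℕ) else (i:ℕ)+1) ≤ m := by
    intro i
    have := i.isLt
    split <;> omega
  have hsane : ∀ i : Fin m, (if (i:ℕ) < x then (i:ℕ) else (i:ℕ)+1) ≠ x := by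
    intro i
    split <;> omega
  refine ⟨fun i => ⟨if (i:ℕ) < x then (i:ℕ) else (i:ℕ)+1, hsa i⟩, Or.inl ⟨?_, ?_, ?_⟩⟩
  · intro i j hij
    have : (i:ℕ) < (j:ℕ) := hij
    simp only [Fin.mk_lt_mk]
    split <;> split <;> omega
  · intro i j hij
    have hij' : (i:ℕ) < (j:ℕ) := hij
    refine Fin.lt_def.mpr (hinc _ _ ?_ ?_ ?_ ?_)
    · rw [hval i, hval j]
      split <;> split <;> omega
    · rw [hval j]; exact hsale j
    · rw [hval i]; exact hsane i
    · rw [hval j]; exact hsane j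
  · intro i j
    simp only [Fin.val_mk]
    have hv : m ≤ (σ (⟨if (j:ℕ) < x then (j:ℕ) else (j:ℕ)+1, hsa j⟩ : Fin (2*m)) : ℕ) := by
      refine hlow _ ?_ ?_
      · rw [hval j]; exact hsale j
      · rw [hval j]; exact hsane j
    have := hsale i
    omega

lemma PL_imp_cross (hm : 1 ≤ m) (σ : Equiv.Perm (Fin (2*m))) (h : PL m σ) :
    HasCrossing (2*m) m σ := by
  have hval : ∀ i : Fin m, (σ (⟨m + (i:ℕ), by omega⟩ : Fin (2*m)) : ℕ) = (i:ℕ) := by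
    intro i
    have := h ⟨m + (i:ℕ), by omega⟩ (by simp only [Fin.val_mk]; omega)
    simp only [Fin.val_mk] at this
    omega
  refine ⟨fun i => ⟨m + (i:ℕ), by omega⟩, Or.inr ⟨?_, ?_, ?_⟩⟩
  · intro i j hij
    simp only [Fin.mk_lt_mk]
    have : (i:ℕ) < (j:ℕ) := hij
    omega
  · intro i j hij
    have : (i:ℕ) < (j:ℕ) := hij
    refine Fin.lt_def.mpr ?_
    rw [hval i, hval j]
    exact this
  · intro i j
    rw [hval i]
    simp only [Fin.val_mk]
    have := i.isLt
    omega

lemma cross_iff (hm : 1 ≤ m) (σ : Equiv.Perm (Fin (2*m))) :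
    HasCrossing (2*m) m σ ↔ PA m σ ∨ PB m σ ∨ PL m σ := by
  constructor
  · rintro ⟨a, hU | hL⟩
    · rcases upper_cross_imp hm σ hU with h | h
      · exact Or.inl h
      · exact Or.inr (Or.inl h)
    · exact Or.inr (Or.inr (lower_cross_imp hm σ hL))
  · rintro (h | h | h)
    · exact PA_imp_cross hm σ h
    · exact PB_imp_cross hm σ h
    · exact PL_imp_cross hm σ h

end Even

section EvenNest
variable {m : ℕ}

lemma upper_nest_imp (hm : 1 ≤ m) (σ : Equiv.Perm (Fin (2*m)))
    {a : Fin m → Fin (2*m)} (h : IsUpperNesting (2*m) m σ a) :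
    QA m σ ∨ QB m σ := by
  obtain ⟨ha, hb, hab⟩ := h
  have hm1 : m - 1 < m := by omega
  have h0m : 0 < m := hm
  have h2 := gap_anti hb (m-1) ⟨0, h0m⟩ ⟨m-1, hm1⟩ (by simp only [Fin.val_mk]; omega)
  have h3 : (σ (a ⟨0, h0m⟩) : ℕ) < 2*m := (σ (a _)).isLt
  have h4 : (a ⟨m-1, hm1⟩ : ℕ) ≤ σ (a ⟨m-1, hm1⟩) := hab _ _
  have hup : ∀ i : Fin m, (a i : ℕ) + (m - 1 - (i:ℕ)) ≤ (a ⟨m-1, hm1⟩ : ℕ) := by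
    intro i
    have := gap_mono ha (m-1-(i:ℕ)) i ⟨m-1, hm1⟩ (by simp only [Fin.val_mk]; omega)
    omega
  have hlo : ∀ i : Fin m, (i:ℕ) ≤ (a i : ℕ) := by
    intro i
    have := gap_mono ha ((i:ℕ)) ⟨0, h0m⟩ i (by simp only [Fin.val_mk]; omega)
    omega
  by_cases hc : (a ⟨m-1, hm1⟩ : ℕ) = m
  · right
    have hbound : ∀ i, (a i : ℕ) ≤ m := by
      intro i
      have h5 := hup i
      omega
    obtain ⟨x, hxm, hmiss, hcov⟩ := missing_val hm ha hbound
    refine ⟨x, hxm, ?_, ?_⟩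
    · intro i hi hix
      obtain ⟨t, rfl⟩ := hcov i hi hix
      have h5 : (a ⟨m-1, hm1⟩ : ℕ) ≤ σ (a t) := hab _ _
      omega
    · intro i j hij hj hix hjx
      obtain ⟨s, rfl⟩ := hcov i (by omega) hix
      obtain ⟨t, rfl⟩ := hcov j hj hjx
      have hst : s < t := ha.lt_iff_lt.mp (Fin.lt_def.mpr hij)
      exact Fin.lt_def.mp (hb hst)
  · left
    have hai : ∀ i : Fin m, (a i : ℕ) = (i:ℕ) := by
      intro i
      have h5 := hup i
      have h6 := hlo i
      have h7 := hlo ⟨m-1, hm1⟩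
      have hil : (i:ℕ) ≤ m - 1 := by omega
      omega
    constructor
    · intro i j hij hjm
      have hii : (i:ℕ) < m := by omega
      have e1 : a ⟨(i:ℕ), hii⟩ = i := Fin.ext (by rw [hai])
      have e2 : a ⟨(j:ℕ), hjm⟩ = j := Fin.ext (by rw [hai])
      have h8 : σ (a ⟨(j:ℕ), hjm⟩) < σ (a ⟨(i:ℕ), hii⟩) := hb (by simp only [Fin.mk_lt_mk]; exact hij)
      rw [e1, e2] at h8
      exact Fin.lt_def.mp h8
    · intro i hi0
      have e1 : a ⟨m-1, hm1⟩ = i := Fin.ext (by rw [hai]; simp only [Fin.val_mk]; omega)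
      rw [e1] at h4
      have h9 : m - 1 ≤ (i : ℕ) := by omega
      omega

lemma lower_nest_imp (hm : 1 ≤ m) (σ : Equiv.Perm (Fin (2*m)))
    {a : Fin m → Fin (2*m)} (h : IsLowerNesting (2*m) m σ a) :
    QL m σ := by
  obtain ⟨ha, hb, hab⟩ := h
  have hm1 : m - 1 < m := by omega
  have h0m : 0 < m := hm
  have h1 := gap_mono ha (m-1) ⟨0, h0m⟩ ⟨m-1, hm1⟩ (by simp only [Fin.val_mk]; omega)
  have h2 := gap_anti hb (m-1) ⟨0, h0m⟩ ⟨m-1, hm1⟩ (by simp only [Fin.val_mk]; omega)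
  have h3 : (σ (a ⟨0, h0m⟩) : ℕ) < a ⟨0, h0m⟩ := hab _ _
  have h4 : (a ⟨m-1, hm1⟩ : ℕ) < 2*m := (a _).isLt
  have ha0 : (a ⟨0, h0m⟩ : ℕ) = m := by omega
  have hai : ∀ i : Fin m, (a i : ℕ) = m + (i:ℕ) := by
    intro i
    have hl := gap_mono ha ((i:ℕ)) ⟨0, h0m⟩ i (by simp only [Fin.val_mk]; omega)
    have hu := gap_mono ha (m-1-(i:ℕ)) i ⟨m-1, hm1⟩ (by simp only [Fin.val_mk]; omega)
    omega
  have hsi : ∀ i : Fin m, (σ (a i) : ℕ) + (i:ℕ) + 1 = m := by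
    intro i
    have hl := gap_anti hb ((i:ℕ)) ⟨0, h0m⟩ i (by simp only [Fin.val_mk]; omega)
    have hu := gap_anti hb (m-1-(i:ℕ)) i ⟨m-1, hm1⟩ (by simp only [Fin.val_mk]; omega)
    omega
  intro p hp
  have hpm : (p:ℕ) - m < m := by omega
  have e1 : a ⟨(p:ℕ) - m, hpm⟩ = p := Fin.ext (by rw [hai]; simp only [Fin.val_mk]; omega)
  have h6 := hsi ⟨(p:ℕ) - m, hpm⟩
  rw [e1] at h6
  simp only [Fin.val_mk] at h6
  omega

lemma QA_imp_nest (hm : 1 ≤ m) (σ : Equiv.Perm (Fin (2*m))) (h : QA m σ) :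
    HasNesting (2*m) m σ := by
  obtain ⟨h1, h2⟩ := h
  have h0m : 0 < 2*m := by omega
  have hm1' : m - 1 < 2*m := by omega
  have hs0 : m ≤ (σ ⟨m-1, hm1'⟩ : ℕ) + 1 := h2 _ rfl
  have hbanti : StrictAnti (fun i : Fin m => σ (⟨(i:ℕ), by omega⟩ : Fin (2*m))) := by
    intro i j hij
    have hij' : (i:ℕ) < (j:ℕ) := hij
    exact Fin.lt_def.mpr (h1 _ _ (by simp only [Fin.val_mk]; exact hij')
      (by simp only [Fin.val_mk]; omega))
  refine ⟨fun i => ⟨(i:ℕ), by omega⟩, Or.inl ⟨?_, hbanti, ?_⟩⟩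
  · intro i j hij
    simp only [Fin.mk_lt_mk]
    exact hij
  · intro i j
    have hg := gap_anti hbanti (m-1-(j:ℕ)) j ⟨m-1, by omega⟩ (by simp only [Fin.val_mk]; omega)
    have hz : (σ (⟨((⟨m-1, show m-1 < m by omega⟩ : Fin m) : ℕ), by omega⟩ : Fin (2*m)) : ℕ)
        = (σ ⟨m-1, hm1'⟩ : ℕ) := rfl
    simp only [Fin.val_mk] at hg ⊢
    have hi := i.isLt
    omega

lemma QB_imp_nest (hm : 1 ≤ m) (σ : Equiv.Perm (Fin (2*m))) (h : QB m σ) :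
    HasNesting (2*m) m σ := by
  obtain ⟨x, hxm, hlow, hdec⟩ := h
  have hsa : ∀ i : Fin m, (if (i:ℕ) < x then (i:ℕ) else (i:ℕ)+1) < 2*m := by
    intro i
    have := i.isLt
    split <;> omega
  have hval : ∀ i : Fin m,
      ((⟨if (i:ℕ) < x then (i:ℕ) else (i:ℕ)+1, hsa i⟩ : Fin (2*m)) : ℕ)
        = if (i:ℕ) < x then (i:ℕ) else (i:ℕ)+1 := fun i => rfl
  have hsale : ∀ i : Fin m, (if (i:ℕ) < x then (i:ℕ) else (i:ℕ)+1) ≤ m := by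
    intro i
    have := i.isLt
    split <;> omega
  have hsane : ∀ i : Fin m, (if (i:ℕ) < x then (i:ℕ) else (i:ℕ)+1) ≠ x := by
    intro i
    split <;> omega
  refine ⟨fun i => ⟨if (i:ℕ) < x then (i:ℕ) else (i:ℕ)+1, hsa i⟩, Or.inl ⟨?_, ?_, ?_⟩⟩
  · intro i j hij
    have : (i:ℕ) < (j:ℕ) := hij
    simp only [Fin.mk_lt_mk]
    split <;> split <;> omega
  · intro i j hij
    have hij' : (i:ℕ) < (j:ℕ) := hij
    refine Fin.lt_def.mpr (hdec _ _ ?_ ?_ ?_ ?_)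
    · rw [hval i, hval j]
      split <;> split <;> omega
    · rw [hval j]; exact hsale j
    · rw [hval i]; exact hsane i
    · rw [hval j]; exact hsane j
  · intro i j
    simp only [Fin.val_mk]
    have hv : m ≤ (σ (⟨if (j:ℕ) < x then (j:ℕ) else (j:ℕ)+1, hsa j⟩ : Fin (2*m)) : ℕ) := by
      refine hlow _ ?_ ?_
      · rw [hval j]; exact hsale j
      · rw [hval j]; exact hsane j
    have := hsale i
    omega

lemma QL_imp_nest (hm : 1 ≤ m) (σ : Equiv.Perm (Fin (2*m))) (h : QL m σ) :
    HasNesting (2*m) m σ := by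
  have hval : ∀ i : Fin m, (σ (⟨m + (i:ℕ), by omega⟩ : Fin (2*m)) : ℕ) + (i:ℕ) + 1 = m := by
    intro i
    have := h ⟨m + (i:ℕ), by omega⟩ (by simp only [Fin.val_mk]; omega)
    simp only [Fin.val_mk] at this
    omega
  refine ⟨fun i => ⟨m + (i:ℕ), by omega⟩, Or.inr ⟨?_, ?_, ?_⟩⟩
  · intro i j hij
    simp only [Fin.mk_lt_mk]
    have : (i:ℕ) < (j:ℕ) := hij
    omega
  · intro i j hij
    have hij' : (i:ℕ) < (j:ℕ) := hij
    have hvi := hval i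
    have hvj := hval j
    show σ (⟨m + (j:ℕ), by omega⟩ : Fin (2*m)) < σ (⟨m + (i:ℕ), by omega⟩ : Fin (2*m))
    rw [Fin.lt_def]
    omega
  · intro i j
    have hvi := hval i
    simp only [Fin.val_mk]
    omega

lemma nest_iff (hm : 1 ≤ m) (σ : Equiv.Perm (Fin (2*m))) :
    HasNesting (2*m) m σ ↔ QA m σ ∨ QB m σ ∨ QL m σ := by
  constructor
  · rintro ⟨a, hU | hL⟩
    · rcases upper_nest_imp hm σ hU with h | h
      · exact Or.inl h
      · exact Or.inr (Or.inl h)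
    · exact Or.inr (Or.inr (lower_nest_imp hm σ hL))
  · rintro (h | h | h)
    · exact QA_imp_nest hm σ h
    · exact QB_imp_nest hm σ h
    · exact QL_imp_nest hm σ h

end EvenNest

section Regions
variable {m : ℕ}

lemma mkInvo_mul_self {N : ℕ} (f : Fin N → Fin N) (h) :
    mkInvo f h * mkInvo f h = 1 := Equiv.ext fun x => h x

lemma low_val (hm : 1 ≤ m) {x : ℕ} (hx : x ≤ m) (σ : Equiv.Perm (Fin (2*m)))
    (hlow : ∀ i : Fin (2*m), (i:ℕ) ≤ m → (i:ℕ) ≠ x → m ≤ (σ i:ℕ)) :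
    (σ ⟨x, by omega⟩ : ℕ) < m := by
  by_contra hbig
  push_neg at hbig
  have hall : ∀ i : Fin (m+1), m ≤ (σ ⟨(i:ℕ), by omega⟩ : ℕ) := by
    intro i
    by_cases hix : (i:ℕ) = x
    · have e : (⟨(i:ℕ), by omega⟩ : Fin (2*m)) = ⟨x, by omega⟩ := Fin.ext hix
      rw [e]
      exact hbig
    · exact hlow _ (by simp only [Fin.val_mk]; omega) (by simp only [Fin.val_mk]; exact hix)
  have hinj : Function.Injective
      (fun i : Fin (m+1) => (⟨(σ ⟨(i:ℕ), by omega⟩ : ℕ) - m, by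
        have := (σ (⟨(i:ℕ), by omega⟩ : Fin (2*m))).isLt
        have := hall i
        omega⟩ : Fin m)) := by
    intro i j hij
    have hv : (σ (⟨(i:ℕ), by omega⟩ : Fin (2*m)) : ℕ) - m
        = (σ (⟨(j:ℕ), by omega⟩ : Fin (2*m)) : ℕ) - m := congrArg Fin.val hij
    have hi := hall i
    have hj := hall j
    have he : σ (⟨(i:ℕ), by omega⟩ : Fin (2*m)) = σ ⟨(j:ℕ), by omega⟩ := Fin.ext (by omega)
    have h5 := σ.injective he
    have h6 : (i:ℕ) = (j:ℕ) := by simpa using congrArg Fin.val h5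
    exact Fin.ext h6
  have := Fintype.card_le_of_injective _ hinj
  simp at this

lemma pbw_low (hm : 1 ≤ m) {x : ℕ} (hx : x ≤ m) {σ : Equiv.Perm (Fin (2*m))}
    (h : PBW m x σ) : (σ ⟨x, by omega⟩ : ℕ) < m := low_val hm hx σ h.1

lemma qbw_low (hm : 1 ≤ m) {x : ℕ} (hx : x ≤ m) {σ : Equiv.Perm (Fin (2*m))}
    (h : QBW m x σ) : (σ ⟨x, by omega⟩ : ℕ) < m := low_val hm hx σ h.1

lemma low_unique (hm : 1 ≤ m) {x y : ℕ} (hx : x ≤ m) (hy : y ≤ m)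
    {σ : Equiv.Perm (Fin (2*m))}
    (hlx : ∀ i : Fin (2*m), (i:ℕ) ≤ m → (i:ℕ) ≠ x → m ≤ (σ i:ℕ))
    (hly : ∀ i : Fin (2*m), (i:ℕ) ≤ m → (i:ℕ) ≠ y → m ≤ (σ i:ℕ)) : x = y := by
  by_contra hne
  have h1 := low_val hm hx σ hlx
  have h2 := hly ⟨x, by omega⟩ (by simpa using hx) (by simpa using hne)
  omega

/-- positions below m have values ≥ m, under PL -/
lemma pl_top (hm : 1 ≤ m) {σ : Equiv.Perm (Fin (2*m))} (h : PL m σ) :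
    ∀ i : Fin (2*m), (i:ℕ) < m → m ≤ (σ i:ℕ) := by
  intro i hi
  by_contra hv
  push_neg at hv
  have hj := h ⟨m + (σ i:ℕ), by omega⟩ (by simp only [Fin.val_mk]; omega)
  simp only [Fin.val_mk] at hj
  have he : σ (⟨m + (σ i:ℕ), by omega⟩ : Fin (2*m)) = σ i := Fin.ext (by omega)
  have := σ.injective he
  have := congrArg Fin.val this
  simp only [Fin.val_mk] at this
  omega

lemma ql_top (hm : 1 ≤ m) {σ : Equiv.Perm (Fin (2*m))} (h : QL m σ) :
    ∀ i : Fin (2*m), (i:ℕ) < m → m ≤ (σ i:ℕ) := by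
  intro i hi
  by_contra hv
  push_neg at hv
  have hj := h ⟨2*m - 1 - (σ i:ℕ), by omega⟩ (by simp only [Fin.val_mk]; omega)
  simp only [Fin.val_mk] at hj
  have he : σ (⟨2*m - 1 - (σ i:ℕ), by omega⟩ : Fin (2*m)) = σ i := Fin.ext (by omega)
  have := σ.injective he
  have := congrArg Fin.val this
  simp only [Fin.val_mk] at this
  omega

lemma pl_PB_iff_PA (hm : 1 ≤ m) {σ : Equiv.Perm (Fin (2*m))} (hPL : PL m σ) :
    PB m σ ↔ PA m σ := by
  have hsm : (σ ⟨m, by omega⟩ : ℕ) = 0 := by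
    have := hPL ⟨m, by omega⟩ (by simp only [Fin.val_mk]; omega)
    simp only [Fin.val_mk] at this ⊢
    omega
  constructor
  · rintro ⟨x, hx, hlow, hinc⟩
    have hxm : x = m := by
      by_contra hne
      have := hlow ⟨m, by omega⟩ (by simp only [Fin.val_mk]; omega) (by simp only [Fin.val_mk]; omega)
      omega
    subst hxm
    constructor
    · intro i j hij hjm
      exact hinc i j hij (by omega) (by omega) (by omega)
    · intro i hi0
      have := pl_top hm hPL i (by omega)
      omega
  · intro hPA
    refine ⟨m, le_refl m, ?_, ?_⟩
    · intro i hi hne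
      exact pl_top hm hPL i (by omega)
    · intro i j hij hj hix hjx
      exact hPA.1 i j hij (by omega)

lemma ql_QB_iff_QA (hm : 1 ≤ m) {σ : Equiv.Perm (Fin (2*m))} (hQL : QL m σ) :
    QB m σ ↔ QA m σ := by
  have hsm : (σ ⟨m, by omega⟩ : ℕ) = m - 1 := by
    have := hQL ⟨m, by omega⟩ (by simp only [Fin.val_mk]; omega)
    simp only [Fin.val_mk] at this ⊢
    omega
  constructor
  · rintro ⟨x, hx, hlow, hdec⟩
    have hxm : x = m := by
      by_contra hne
      have := hlow ⟨m, by omega⟩ (by simp only [Fin.val_mk]; omega) (by simp only [Fin.val_mk]; omega)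
      omega
    subst hxm
    constructor
    · intro i j hij hjm
      exact hdec i j hij (by omega) (by omega) (by omega)
    · intro i hi0
      have := ql_top hm hQL i (by omega)
      omega
  · intro hQA
    refine ⟨m, le_refl m, ?_, ?_⟩
    · intro i hi hne
      exact ql_top hm hQL i (by omega)
    · intro i j hij hj hix hjx
      exact hQA.1 i j hij (by omega)

def rho1 (m : ℕ) : Equiv.Perm (Fin (2*m)) :=
  mkInvo (fun j => if h : (j:ℕ) < m then ⟨m-1-(j:ℕ), by omega⟩ else j) (by
    intro x
    by_cases h : (x:ℕ) < m
    · simp only [h, dif_pos]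
      have h2 : m-1-(x:ℕ) < m := by omega
      simp only [Fin.val_mk, h2, dif_pos]
      exact Fin.ext (by simp only [Fin.val_mk]; omega)
    · simp only [h, dif_neg, not_false_iff])

def rho4 (m : ℕ) : Equiv.Perm (Fin (2*m)) :=
  mkInvo (fun j => if h : (j:ℕ) < m then ⟨m-1-(j:ℕ), by omega⟩
    else ⟨3*m-1-(j:ℕ), by have := j.isLt; omega⟩) (by
    intro x
    by_cases h : (x:ℕ) < m
    · simp only [h, dif_pos]
      have h2 : m-1-(x:ℕ) < m := by omega
      simp only [Fin.val_mk, h2, dif_pos]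
      exact Fin.ext (by simp only [Fin.val_mk]; omega)
    · simp only [h, dif_neg, not_false_iff]
      have := x.isLt
      have h2 : ¬ (3*m-1-(x:ℕ) < m) := by omega
      simp only [Fin.val_mk, h2, dif_neg, not_false_iff]
      exact Fin.ext (by simp only [Fin.val_mk]; omega))

lemma rho1_lt {j : Fin (2*m)} (h : (j:ℕ) < m) : ((rho1 m j : Fin (2*m)) : ℕ) = m-1-(j:ℕ) := by
  simp only [rho1, mkInvo_apply, h, dif_pos]

lemma rho1_ge {j : Fin (2*m)} (h : ¬ (j:ℕ) < m) : rho1 m j = j := by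
  simp only [rho1, mkInvo_apply, h, dif_neg, not_false_iff]

lemma rho4_lt {j : Fin (2*m)} (h : (j:ℕ) < m) : ((rho4 m j : Fin (2*m)) : ℕ) = m-1-(j:ℕ) := by
  simp only [rho4, mkInvo_apply, h, dif_pos]

lemma rho4_ge {j : Fin (2*m)} (h : ¬ (j:ℕ) < m) : ((rho4 m j : Fin (2*m)) : ℕ) = 3*m-1-(j:ℕ) := by
  simp only [rho4, mkInvo_apply, h, dif_neg, not_false_iff]

lemma rho1_invol : rho1 m * rho1 m = 1 := mkInvo_mul_self _ _

lemma rho4_invol : rho4 m * rho4 m = 1 := mkInvo_mul_self _ _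

lemma rho1_sq (σ : Equiv.Perm (Fin (2*m))) : σ * rho1 m * rho1 m = σ := by
  rw [mul_assoc, rho1_invol, mul_one]

lemma rho4_sq (σ : Equiv.Perm (Fin (2*m))) : σ * rho4 m * rho4 m = σ := by
  rw [mul_assoc, rho4_invol, mul_one]

lemma PA_to_QA (hm : 1 ≤ m) (σ : Equiv.Perm (Fin (2*m))) (h : PA m σ) : QA m (σ * rho1 m) := by
  have happ : ∀ j : Fin (2*m), (j:ℕ) < m →
      (σ * rho1 m) j = σ ⟨m-1-(j:ℕ), by omega⟩ := by
    intro j hj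
    rw [Equiv.Perm.mul_apply]
    congr 1
    exact Fin.ext (by rw [rho1_lt hj])
  constructor
  · intro i j hij hjm
    rw [happ i (by omega), happ j hjm]
    exact h.1 _ _ (by simp only [Fin.val_mk]; omega) (by simp only [Fin.val_mk]; omega)
  · intro i hi
    rw [happ i (by omega)]
    refine h.2 _ ?_
    simp only [Fin.val_mk]
    omega

lemma QA_to_PA (hm : 1 ≤ m) (σ : Equiv.Perm (Fin (2*m))) (h : QA m σ) : PA m (σ * rho1 m) := by
  have happ : ∀ j : Fin (2*m), (j:ℕ) < m →
      (σ * rho1 m) j = σ ⟨m-1-(j:ℕ), by omega⟩ := by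
    intro j hj
    rw [Equiv.Perm.mul_apply]
    congr 1
    exact Fin.ext (by rw [rho1_lt hj])
  constructor
  · intro i j hij hjm
    rw [happ i (by omega), happ j hjm]
    exact h.1 _ _ (by simp only [Fin.val_mk]; omega) (by simp only [Fin.val_mk]; omega)
  · intro i hi
    rw [happ i (by omega)]
    refine h.2 _ ?_
    simp only [Fin.val_mk]
    omega

lemma PA_iff_QA (hm : 1 ≤ m) (σ : Equiv.Perm (Fin (2*m))) :
    PA m σ ↔ QA m (σ * rho1 m) := by
  constructor
  · exact PA_to_QA hm σ
  · intro h
    have := QA_to_PA hm _ h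
    rwa [rho1_sq] at this

lemma QA_congr {τ1 τ2 : Equiv.Perm (Fin (2*m))}
    (h : ∀ i : Fin (2*m), (i:ℕ) < m → τ1 i = τ2 i) : QA m τ1 ↔ QA m τ2 := by
  have hsym : ∀ i : Fin (2*m), (i:ℕ) < m → τ2 i = τ1 i := fun i hi => (h i hi).symm
  constructor <;> intro hq <;> constructor
  · intro i j hij hjm
    rw [← h i (by omega), ← h j hjm]
    exact hq.1 i j hij hjm
  · intro i hi
    rw [← h i (by omega)]
    exact hq.2 i hi
  · intro i j hij hjm
    rw [h i (by omega), h j hjm]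
    exact hq.1 i j hij hjm
  · intro i hi
    rw [h i (by omega)]
    exact hq.2 i hi

lemma rho14_agree (hm : 1 ≤ m) (σ : Equiv.Perm (Fin (2*m))) :
    ∀ i : Fin (2*m), (i:ℕ) < m → (σ * rho1 m) i = (σ * rho4 m) i := by
  intro i hi
  simp only [Equiv.Perm.mul_apply]
  congr 1
  exact Fin.ext (by rw [rho1_lt hi, rho4_lt hi])

lemma PL_to_QL (hm : 1 ≤ m) (σ : Equiv.Perm (Fin (2*m))) (h : PL m σ) : QL m (σ * rho4 m) := by
  intro i hi
  have hge : ¬ (i:ℕ) < m := by omega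
  have happ : (σ * rho4 m) i = σ ⟨3*m-1-(i:ℕ), by have := i.isLt; omega⟩ := by
    rw [Equiv.Perm.mul_apply]
    congr 1
    exact Fin.ext (by rw [rho4_ge hge])
  rw [happ]
  have := h ⟨3*m-1-(i:ℕ), by have := i.isLt; omega⟩ (by simp only [Fin.val_mk]; have := i.isLt; omega)
  simp only [Fin.val_mk] at this
  have := i.isLt
  omega

lemma QL_to_PL (hm : 1 ≤ m) (σ : Equiv.Perm (Fin (2*m))) (h : QL m σ) : PL m (σ * rho4 m) := by
  intro i hi
  have hge : ¬ (i:ℕ) < m := by omega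
  have happ : (σ * rho4 m) i = σ ⟨3*m-1-(i:ℕ), by have := i.isLt; omega⟩ := by
    rw [Equiv.Perm.mul_apply]
    congr 1
    exact Fin.ext (by rw [rho4_ge hge])
  rw [happ]
  have := h ⟨3*m-1-(i:ℕ), by have := i.isLt; omega⟩ (by simp only [Fin.val_mk]; have := i.isLt; omega)
  simp only [Fin.val_mk] at this
  have := i.isLt
  omega

lemma PL_iff_QL (hm : 1 ≤ m) (σ : Equiv.Perm (Fin (2*m))) :
    PL m σ ↔ QL m (σ * rho4 m) := by
  constructor
  · exact PL_to_QL hm σ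
  · intro h
    have := QL_to_PL hm _ h
    rwa [rho4_sq] at this

/-- Region 3 correspondence. -/
lemma region3_iff (hm : 1 ≤ m) (σ : Equiv.Perm (Fin (2*m))) :
    (PL m σ ∧ ¬ PA m σ ∧ ¬ PB m σ) ↔
      (QL m (σ * rho4 m) ∧ ¬ QA m (σ * rho4 m) ∧ ¬ QB m (σ * rho4 m)) := by
  by_cases hPL : PL m σ
  · have hQL : QL m (σ * rho4 m) := PL_to_QL hm σ hPL
    have hPAQA : PA m σ ↔ QA m (σ * rho4 m) := by
      rw [PA_iff_QA hm σ]
      exact QA_congr (rho14_agree hm σ)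
    have h1 : PB m σ ↔ PA m σ := pl_PB_iff_PA hm hPL
    have h2 : QB m (σ * rho4 m) ↔ QA m (σ * rho4 m) := ql_QB_iff_QA hm hQL
    constructor
    · rintro ⟨-, hnPA, -⟩
      exact ⟨hQL, fun h => hnPA (hPAQA.mpr h), fun h => hnPA (hPAQA.mpr (h2.mp h))⟩
    · rintro ⟨-, hnQA, -⟩
      exact ⟨hPL, fun h => hnQA (hPAQA.mp h), fun h => hnQA (hPAQA.mp (h1.mp h))⟩
  · constructor
    · rintro ⟨h, -, -⟩
      exact absurd h hPL
    · rintro ⟨h, -, -⟩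
      exact absurd ((PL_iff_QL hm σ).mpr h) hPL

end Regions

section Region2
variable {m : ℕ}

lemma pbw_m_PA (hm : 1 ≤ m) {σ : Equiv.Perm (Fin (2*m))} (hw : PBW m m σ) : PA m σ := by
  constructor
  · intro i j hij hjm
    exact hw.2 i j hij (by omega) (by omega) (by omega)
  · intro i hi
    have := hw.1 i (by omega) (by omega)
    omega

lemma pbw_PA_cases (hm : 1 ≤ m) {x : ℕ} (hx : x ≤ m) {σ : Equiv.Perm (Fin (2*m))}
    (hw : PBW m x σ) (hPA : PA m σ) :
    x = m ∨ (x = 0 ∧ (σ ⟨0, by omega⟩ : ℕ) = m - 1) := by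
  by_cases hxm : x = m
  · exact Or.inl hxm
  · right
    have hlt := pbw_low hm hx hw
    by_cases hx0 : x = 0
    · subst hx0
      have h2 := hPA.2 ⟨0, by omega⟩ rfl
      refine ⟨rfl, ?_⟩
      omega
    · exfalso
      have h0 : m ≤ (σ ⟨0, by omega⟩ : ℕ) := hw.1 ⟨0, by omega⟩ (by simp) (by simpa using (Ne.symm hx0))
      have h1 : (σ (⟨0, by omega⟩ : Fin (2*m)) : ℕ) < σ ⟨x, by omega⟩ :=
        hPA.1 _ _ (by simp only [Fin.val_mk]; omega) (by simp only [Fin.val_mk]; omega)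
      omega

lemma pbw_zero_PA (hm : 1 ≤ m) {σ : Equiv.Perm (Fin (2*m))}
    (hw : PBW m 0 σ) (hval : (σ ⟨0, by omega⟩ : ℕ) = m - 1) : PA m σ := by
  constructor
  · intro i j hij hjm
    by_cases hi0 : (i:ℕ) = 0
    · have hvi : (σ i : ℕ) = m - 1 := by
        rw [show i = ⟨0, by omega⟩ from Fin.ext hi0]
        exact hval
      have := hw.1 j (by omega) (by omega)
      omega
    · exact hw.2 i j hij (by omega) hi0 (by omega)
  · intro i hi
    have hvi : (σ i : ℕ) = m - 1 := by
      rw [show i = ⟨0, by omega⟩ from Fin.ext hi]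
      exact hval
    omega

lemma qbw_m_QA (hm : 1 ≤ m) {σ : Equiv.Perm (Fin (2*m))} (hw : QBW m m σ) : QA m σ := by
  constructor
  · intro i j hij hjm
    exact hw.2 i j hij (by omega) (by omega) (by omega)
  · intro i hi
    have := hw.1 i (by omega) (by omega)
    omega

lemma qbw_QA_cases (hm : 1 ≤ m) {x : ℕ} (hx : x ≤ m) {σ : Equiv.Perm (Fin (2*m))}
    (hw : QBW m x σ) (hQA : QA m σ) :
    x = m ∨ (x = m - 1 ∧ (σ ⟨m-1, by omega⟩ : ℕ) = m - 1) := by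
  by_cases hxm : x = m
  · exact Or.inl hxm
  · right
    have hlt := qbw_low hm hx hw
    by_cases hx1 : x = m - 1
    · subst hx1
      have h2 := hQA.2 ⟨m-1, by omega⟩ rfl
      exact ⟨rfl, by omega⟩
    · exfalso
      have h0 : m ≤ (σ ⟨m-1, by omega⟩ : ℕ) := hw.1 ⟨m-1, by omega⟩
        (by simp only [Fin.val_mk]; omega) (by simp only [Fin.val_mk]; omega)
      have h1 : (σ (⟨m-1, by omega⟩ : Fin (2*m)) : ℕ) < σ ⟨x, by omega⟩ :=
        hQA.1 _ _ (by simp only [Fin.val_mk]; omega) (by simp only [Fin.val_mk]; omega)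
      omega

lemma qbw_m1_QA (hm : 1 ≤ m) {σ : Equiv.Perm (Fin (2*m))}
    (hw : QBW m (m-1) σ) (hval : (σ ⟨m-1, by omega⟩ : ℕ) = m - 1) : QA m σ := by
  constructor
  · intro i j hij hjm
    by_cases hj1 : (j:ℕ) = m - 1
    · have hvj : (σ j : ℕ) = m - 1 := by
        rw [show j = ⟨m-1, by omega⟩ from Fin.ext hj1]
        exact hval
      have := hw.1 i (by omega) (by omega)
      omega
    · exact hw.2 i j hij (by omega) (by omega) hj1
  · intro i hi
    have hvi : (σ i : ℕ) = m - 1 := by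
      rw [show i = ⟨m-1, by omega⟩ from Fin.ext hi]
      exact hval
    omega

/-- block permutation on `Fin (m+1)`: sends `x'` to `x` and the increasing
enumeration of the complement of `x'` to the decreasing enumeration of the
complement of `x`. -/
def pB (x x' : Fin (m+1)) : Equiv.Perm (Fin (m+1)) :=
  (finSuccEquiv' x').trans ((Equiv.optionCongr Fin.revPerm).trans (finSuccEquiv' x).symm)

lemma pB_at (x x' : Fin (m+1)) : pB x x' x' = x := by
  simp [pB, finSuccEquiv'_at]

lemma pB_succAbove (x x' : Fin (m+1)) (i : Fin m) :
    pB x x' (x'.succAbove i) = x.succAbove i.rev := by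
  simp [pB, finSuccEquiv'_succAbove]

lemma pB_comp (x x' : Fin (m+1)) (j : Fin (m+1)) : pB x' x (pB x x' j) = j := by
  rcases eq_or_ne j x' with rfl | hne
  · rw [pB_at, pB_at]
  · obtain ⟨i, hi⟩ := Fin.exists_succAbove_eq hne
    rw [← hi, pB_succAbove, pB_succAbove, Fin.rev_rev]

def rhoB (hm : 1 ≤ m) (x x' : Fin (m+1)) : Equiv.Perm (Fin (2*m)) where
  toFun := fun j => if h : (j:ℕ) < m+1
    then Fin.castLE (by omega) (pB x x' ⟨(j:ℕ), h⟩) else j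
  invFun := fun j => if h : (j:ℕ) < m+1
    then Fin.castLE (by omega) (pB x' x ⟨(j:ℕ), h⟩) else j
  left_inv := by
    intro j
    by_cases h : (j:ℕ) < m+1
    · simp only [h, dif_pos]
      have h2 : ((Fin.castLE (by omega : m+1 ≤ 2*m) (pB x x' ⟨(j:ℕ), h⟩)) : ℕ) < m+1 := by
        simp only [Fin.coe_castLE]
        exact (pB x x' ⟨(j:ℕ), h⟩).isLt
      simp only [h2, dif_pos]
      have e : (⟨((Fin.castLE (by omega : m+1 ≤ 2*m) (pB x x' ⟨(j:ℕ), h⟩)) : ℕ), h2⟩ : Fin (m+1))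
          = pB x x' ⟨(j:ℕ), h⟩ := Fin.ext (by simp only [Fin.coe_castLE, Fin.val_mk])
      rw [e, pB_comp]
      exact Fin.ext (by simp only [Fin.coe_castLE, Fin.val_mk])
    · simp only [h, dif_neg, not_false_iff]
  right_inv := by
    intro j
    by_cases h : (j:ℕ) < m+1
    · simp only [h, dif_pos]
      have h2 : ((Fin.castLE (by omega : m+1 ≤ 2*m) (pB x' x ⟨(j:ℕ), h⟩)) : ℕ) < m+1 := by
        simp only [Fin.coe_castLE]
        exact (pB x' x ⟨(j:ℕ), h⟩).isLt
      simp only [h2, dif_pos]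
      have e : (⟨((Fin.castLE (by omega : m+1 ≤ 2*m) (pB x' x ⟨(j:ℕ), h⟩)) : ℕ), h2⟩ : Fin (m+1))
          = pB x' x ⟨(j:ℕ), h⟩ := Fin.ext (by simp only [Fin.coe_castLE, Fin.val_mk])
      rw [e, pB_comp]
      exact Fin.ext (by simp only [Fin.coe_castLE, Fin.val_mk])
    · simp only [h, dif_neg, not_false_iff]

lemma rhoB_inv (hm : 1 ≤ m) (x x' : Fin (m+1)) : (rhoB hm x x')⁻¹ = rhoB hm x' x := rfl

lemma rhoB_sq (hm : 1 ≤ m) (x x' : Fin (m+1)) (σ : Equiv.Perm (Fin (2*m))) :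
    σ * rhoB hm x x' * rhoB hm x' x = σ := by
  rw [← rhoB_inv hm x x', mul_inv_cancel_right]

lemma rhoB_lt (hm : 1 ≤ m) (x x' : Fin (m+1)) {j : Fin (2*m)} (h : (j:ℕ) < m+1) :
    rhoB hm x x' j = Fin.castLE (by omega) (pB x x' ⟨(j:ℕ), h⟩) := by
  show (if h : (j:ℕ) < m+1 then Fin.castLE (by omega) (pB x x' ⟨(j:ℕ), h⟩) else j) = _
  simp only [h, dif_pos]

lemma rhoB_ge (hm : 1 ≤ m) (x x' : Fin (m+1)) {j : Fin (2*m)} (h : ¬ (j:ℕ) < m+1) :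
    rhoB hm x x' j = j := by
  show (if h : (j:ℕ) < m+1 then Fin.castLE (by omega) (pB x x' ⟨(j:ℕ), h⟩) else j) = j
  simp only [h, dif_neg, not_false_iff]

lemma succAbove_val (x : Fin (m+1)) (i : Fin m) :
    ((x.succAbove i : Fin (m+1)) : ℕ) = if (i:ℕ) < (x:ℕ) then (i:ℕ) else (i:ℕ)+1 := by
  by_cases h : (i:ℕ) < (x:ℕ)
  · rw [Fin.succAbove_of_castSucc_lt x i (by rw [Fin.lt_def]; simpa using h), if_pos h]
    simp
  · rw [Fin.succAbove_of_le_castSucc x i (by rw [Fin.le_def]; simp; omega), if_neg h]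
    simp

lemma succAbove_val_le (x : Fin (m+1)) (i : Fin m) : ((x.succAbove i : Fin (m+1)) : ℕ) ≤ m := by
  rw [succAbove_val]
  have := i.isLt
  split <;> omega

lemma PBW_to_QBW (hm : 1 ≤ m) (x x' : Fin (m+1)) (σ : Equiv.Perm (Fin (2*m)))
    (hw : PBW m (x:ℕ) σ) : QBW m (x':ℕ) (σ * rhoB hm x x') := by
  have happ : ∀ (j : Fin (2*m)) (h : (j:ℕ) < m+1),
      (σ * rhoB hm x x') j = σ (Fin.castLE (by omega) (pB x x' ⟨(j:ℕ), h⟩)) := by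
    intro j h
    rw [Equiv.Perm.mul_apply, rhoB_lt hm x x' h]
  constructor
  · intro j hj hjx
    have h : (j:ℕ) < m+1 := by omega
    rw [happ j h]
    have hne : (⟨(j:ℕ), h⟩ : Fin (m+1)) ≠ x' := by
      intro hcon
      exact hjx (by rw [← hcon])
    obtain ⟨i, hi⟩ := Fin.exists_succAbove_eq hne
    rw [← hi, pB_succAbove]
    refine hw.1 _ ?_ ?_
    · simp only [Fin.coe_castLE]
      exact succAbove_val_le x i.rev
    · simp only [Fin.coe_castLE]
      intro hcon
      exact Fin.succAbove_ne x i.rev (Fin.ext hcon)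
  · intro i j hij hj hix hjx
    have hi' : (i:ℕ) < m+1 := by omega
    have hj' : (j:ℕ) < m+1 := by omega
    rw [happ i hi', happ j hj']
    have hnei : (⟨(i:ℕ), hi'⟩ : Fin (m+1)) ≠ x' := fun hcon => hix (by rw [← hcon])
    have hnej : (⟨(j:ℕ), hj'⟩ : Fin (m+1)) ≠ x' := fun hcon => hjx (by rw [← hcon])
    obtain ⟨a, ha⟩ := Fin.exists_succAbove_eq hnei
    obtain ⟨b, hb⟩ := Fin.exists_succAbove_eq hnej
    rw [← ha, ← hb, pB_succAbove, pB_succAbove]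
    have hab : a < b := by
      rw [← Fin.succAbove_lt_succAbove_iff (p := x')]
      rw [ha, hb]
      exact Fin.mk_lt_mk.mpr hij
    have hrev : b.rev < a.rev := Fin.rev_lt_rev.mpr hab
    have hsucc : (x.succAbove b.rev : ℕ) < (x.succAbove a.rev : ℕ) :=
      Fin.lt_def.mp (Fin.succAbove_lt_succAbove_iff.mpr hrev)
    refine hw.2 _ _ ?_ ?_ ?_ ?_
    · simp only [Fin.coe_castLE]
      exact hsucc
    · simp only [Fin.coe_castLE]
      exact succAbove_val_le x a.rev
    · simp only [Fin.coe_castLE]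
      intro hcon
      exact Fin.succAbove_ne x b.rev (Fin.ext hcon)
    · simp only [Fin.coe_castLE]
      intro hcon
      exact Fin.succAbove_ne x a.rev (Fin.ext hcon)

lemma QBW_to_PBW (hm : 1 ≤ m) (x x' : Fin (m+1)) (σ : Equiv.Perm (Fin (2*m)))
    (hw : QBW m (x:ℕ) σ) : PBW m (x':ℕ) (σ * rhoB hm x x') := by
  have happ : ∀ (j : Fin (2*m)) (h : (j:ℕ) < m+1),
      (σ * rhoB hm x x') j = σ (Fin.castLE (by omega) (pB x x' ⟨(j:ℕ), h⟩)) := by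
    intro j h
    rw [Equiv.Perm.mul_apply, rhoB_lt hm x x' h]
  constructor
  · intro j hj hjx
    have h : (j:ℕ) < m+1 := by omega
    rw [happ j h]
    have hne : (⟨(j:ℕ), h⟩ : Fin (m+1)) ≠ x' := by
      intro hcon
      exact hjx (by rw [← hcon])
    obtain ⟨i, hi⟩ := Fin.exists_succAbove_eq hne
    rw [← hi, pB_succAbove]
    refine hw.1 _ ?_ ?_
    · simp only [Fin.coe_castLE]
      exact succAbove_val_le x i.rev
    · simp only [Fin.coe_castLE]
      intro hcon
      exact Fin.succAbove_ne x i.rev (Fin.ext hcon)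
  · intro i j hij hj hix hjx
    have hi' : (i:ℕ) < m+1 := by omega
    have hj' : (j:ℕ) < m+1 := by omega
    rw [happ i hi', happ j hj']
    have hnei : (⟨(i:ℕ), hi'⟩ : Fin (m+1)) ≠ x' := fun hcon => hix (by rw [← hcon])
    have hnej : (⟨(j:ℕ), hj'⟩ : Fin (m+1)) ≠ x' := fun hcon => hjx (by rw [← hcon])
    obtain ⟨a, ha⟩ := Fin.exists_succAbove_eq hnei
    obtain ⟨b, hb⟩ := Fin.exists_succAbove_eq hnej
    rw [← ha, ← hb, pB_succAbove, pB_succAbove]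
    have hab : a < b := by
      rw [← Fin.succAbove_lt_succAbove_iff (p := x')]
      rw [ha, hb]
      exact Fin.mk_lt_mk.mpr hij
    have hrev : b.rev < a.rev := Fin.rev_lt_rev.mpr hab
    have hsucc : (x.succAbove b.rev : ℕ) < (x.succAbove a.rev : ℕ) :=
      Fin.lt_def.mp (Fin.succAbove_lt_succAbove_iff.mpr hrev)
    refine hw.2 _ _ ?_ ?_ ?_ ?_
    · simp only [Fin.coe_castLE]
      exact hsucc
    · simp only [Fin.coe_castLE]
      exact succAbove_val_le x a.rev
    · simp only [Fin.coe_castLE]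
      intro hcon
      exact Fin.succAbove_ne x b.rev (Fin.ext hcon)
    · simp only [Fin.coe_castLE]
      intro hcon
      exact Fin.succAbove_ne x a.rev (Fin.ext hcon)

lemma rhoB_at (hm : 1 ≤ m) (x x' : Fin (m+1)) (σ : Equiv.Perm (Fin (2*m))) :
    ((σ * rhoB hm x x') ⟨(x':ℕ), by omega⟩ : ℕ) = (σ ⟨(x:ℕ), by omega⟩ : ℕ) := by
  have h : ((⟨(x':ℕ), by omega⟩ : Fin (2*m)) : ℕ) < m+1 := by
    simp only [Fin.val_mk]
    exact x'.isLt
  rw [Equiv.Perm.mul_apply, rhoB_lt hm x x' h]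
  congr 2
  have e : (⟨((⟨(x':ℕ), by omega⟩ : Fin (2*m)) : ℕ), h⟩ : Fin (m+1)) = x' :=
    Fin.ext (by simp only [Fin.val_mk])
  rw [e, pB_at]
  exact Fin.ext (by simp only [Fin.coe_castLE, Fin.val_mk])

end Region2

section Assembly
open scoped Classical
variable {m : ℕ}

def sdN (m x : ℕ) : ℕ := if x = 0 then m - 1 else x - 1
def suN (m x : ℕ) : ℕ := if x + 1 < m then x + 1 else 0

lemma sdN_lt (hm : 1 ≤ m) {x : ℕ} (hx : x ≤ m) : sdN m x < m := by
  unfold sdN; split <;> omega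

lemma suN_lt (hm : 1 ≤ m) (x : ℕ) : suN m x < m := by
  unfold suN; split <;> omega

lemma suN_sdN (hm : 1 ≤ m) {x : ℕ} (hx : x < m) : suN m (sdN m x) = x := by
  unfold suN sdN
  by_cases h0 : x = 0
  · rw [if_pos h0, if_neg (by omega : ¬ (m - 1 + 1 < m))]
    omega
  · rw [if_neg h0, if_pos (by omega : x - 1 + 1 < m)]
    omega

lemma sdN_suN (hm : 1 ≤ m) {x : ℕ} (hx : x < m) : sdN m (suN m x) = x := by
  unfold suN sdN
  by_cases h : x + 1 < m
  · rw [if_pos h, if_neg (by omega : ¬ (x + 1 = 0))]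
    omega
  · rw [if_neg h, if_pos rfl]
    omega

noncomputable def F0 (hm : 1 ≤ m) (σ : Equiv.Perm (Fin (2*m))) : Equiv.Perm (Fin (2*m)) :=
  if _hPA : PA m σ then σ * rho1 m
  else if hPB : PB m σ then
    σ * rhoB hm ⟨Classical.choose hPB, by
        have := (Classical.choose_spec hPB).1; omega⟩
      ⟨sdN m (Classical.choose hPB), by
        have := sdN_lt hm (Classical.choose_spec hPB).1; omega⟩
  else σ * rho4 m

noncomputable def G0 (hm : 1 ≤ m) (τ : Equiv.Perm (Fin (2*m))) : Equiv.Perm (Fin (2*m)) :=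
  if _hQA : QA m τ then τ * rho1 m
  else if hQB : QB m τ then
    τ * rhoB hm ⟨Classical.choose hQB, by
        have := (Classical.choose_spec hQB).1; omega⟩
      ⟨suN m (Classical.choose hQB), by
        have := suN_lt hm (Classical.choose hQB); omega⟩
  else τ * rho4 m

lemma F0_spec (hm : 1 ≤ m) (σ : Equiv.Perm (Fin (2*m))) (h : PA m σ ∨ PB m σ ∨ PL m σ) :
    (QA m (F0 hm σ) ∨ QB m (F0 hm σ) ∨ QL m (F0 hm σ)) ∧ G0 hm (F0 hm σ) = σ := by
  by_cases hPA : PA m σ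
  · have hF : F0 hm σ = σ * rho1 m := by unfold F0; rw [dif_pos hPA]
    have hQA : QA m (σ * rho1 m) := PA_to_QA hm σ hPA
    rw [hF]
    refine ⟨Or.inl hQA, ?_⟩
    unfold G0
    rw [dif_pos hQA, rho1_sq]
  · by_cases hPB : PB m σ
    · have hspec := Classical.choose_spec hPB
      have hcxm : Classical.choose hPB ≤ m := hspec.1
      have hw : PBW m (Classical.choose hPB) σ := hspec.2
      have hxlt : Classical.choose hPB < m := by
        by_contra hcon
        have he : Classical.choose hPB = m := by omega
        rw [he] at hw
        exact hPA (pbw_m_PA hm hw)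
      have hb1 : Classical.choose hPB < m + 1 := by omega
      have hb2 : sdN m (Classical.choose hPB) < m + 1 := by
        have := sdN_lt hm hcxm; omega
      have hF : F0 hm σ
          = σ * rhoB hm ⟨Classical.choose hPB, hb1⟩ ⟨sdN m (Classical.choose hPB), hb2⟩ := by
        unfold F0
        rw [dif_neg hPA, dif_pos hPB]
      have hQBW : QBW m (sdN m (Classical.choose hPB))
          (σ * rhoB hm ⟨Classical.choose hPB, hb1⟩ ⟨sdN m (Classical.choose hPB), hb2⟩) :=
        PBW_to_QBW hm ⟨Classical.choose hPB, hb1⟩ ⟨sdN m (Classical.choose hPB), hb2⟩ σ hw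
      have hQB : QB m (σ * rhoB hm ⟨Classical.choose hPB, hb1⟩
          ⟨sdN m (Classical.choose hPB), hb2⟩) :=
        ⟨sdN m (Classical.choose hPB), by have := sdN_lt hm hcxm; omega, hQBW⟩
      have hnQA : ¬ QA m (σ * rhoB hm ⟨Classical.choose hPB, hb1⟩
          ⟨sdN m (Classical.choose hPB), hb2⟩) := by
        intro hQA
        rcases qbw_QA_cases hm (by have := sdN_lt hm hcxm; omega) hQBW hQA with h1 | ⟨h1, h2⟩
        · have := sdN_lt hm hcxm; omega
        · have hcx0 : Classical.choose hPB = 0 := by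
            unfold sdN at h1
            by_cases hc : Classical.choose hPB = 0
            · exact hc
            · rw [if_neg hc] at h1; omega
          have hat := rhoB_at hm (⟨Classical.choose hPB, hb1⟩ : Fin (m+1))
            (⟨sdN m (Classical.choose hPB), hb2⟩ : Fin (m+1)) σ
          have e1 : ((⟨((⟨sdN m (Classical.choose hPB), hb2⟩ : Fin (m+1)) : ℕ), by omega⟩ : Fin (2*m)))
              = ⟨m-1, by omega⟩ := Fin.ext (by simp only [Fin.val_mk]; exact h1)
          have e2 : ((⟨((⟨Classical.choose hPB, hb1⟩ : Fin (m+1)) : ℕ), by omega⟩ : Fin (2*m)))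
              = ⟨0, by omega⟩ := Fin.ext (by simp only [Fin.val_mk]; exact hcx0)
          rw [e1, e2] at hat
          have hval0 : (σ ⟨0, by omega⟩ : ℕ) = m - 1 := by rw [← hat]; exact h2
          exact hPA (pbw_zero_PA hm (hcx0 ▸ hw) hval0)
      rw [hF]
      refine ⟨Or.inr (Or.inl hQB), ?_⟩
      unfold G0
      rw [dif_neg hnQA, dif_pos hQB]
      have hspec' := Classical.choose_spec hQB
      have hcym : Classical.choose hQB ≤ m := hspec'.1
      have hw' : QBW m (Classical.choose hQB)
          (σ * rhoB hm ⟨Classical.choose hPB, hb1⟩ ⟨sdN m (Classical.choose hPB), hb2⟩) :=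
        hspec'.2
      have huniq : Classical.choose hQB = sdN m (Classical.choose hPB) := by
        refine low_unique hm hcym (by have := sdN_lt hm hcxm; omega) hw'.1 hQBW.1
      have e3 : (⟨Classical.choose hQB, by omega⟩ : Fin (m+1))
          = ⟨sdN m (Classical.choose hPB), hb2⟩ := Fin.ext (by simp only [Fin.val_mk]; exact huniq)
      have e4 : (⟨suN m (Classical.choose hQB), by have := suN_lt hm (Classical.choose hQB); omega⟩ : Fin (m+1))
          = ⟨Classical.choose hPB, hb1⟩ := Fin.ext (by
            simp only [Fin.val_mk, huniq]
            exact suN_sdN hm hxlt)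
      rw [e3, e4]
      exact rhoB_sq hm _ _ σ
    · have hPL : PL m σ := by tauto
      have hF : F0 hm σ = σ * rho4 m := by
        unfold F0
        rw [dif_neg hPA, dif_neg hPB]
      have hreg := (region3_iff hm σ).mp ⟨hPL, hPA, hPB⟩
      rw [hF]
      refine ⟨Or.inr (Or.inr hreg.1), ?_⟩
      unfold G0
      rw [dif_neg hreg.2.1, dif_neg hreg.2.2, rho4_sq]

lemma G0_spec (hm : 1 ≤ m) (τ : Equiv.Perm (Fin (2*m))) (h : QA m τ ∨ QB m τ ∨ QL m τ) :
    (PA m (G0 hm τ) ∨ PB m (G0 hm τ) ∨ PL m (G0 hm τ)) ∧ F0 hm (G0 hm τ) = τ := by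
  by_cases hQA : QA m τ
  · have hG : G0 hm τ = τ * rho1 m := by unfold G0; rw [dif_pos hQA]
    have hPA : PA m (τ * rho1 m) := QA_to_PA hm τ hQA
    rw [hG]
    refine ⟨Or.inl hPA, ?_⟩
    unfold F0
    rw [dif_pos hPA, rho1_sq]
  · by_cases hQB : QB m τ
    · have hspec := Classical.choose_spec hQB
      have hcxm : Classical.choose hQB ≤ m := hspec.1
      have hw : QBW m (Classical.choose hQB) τ := hspec.2
      have hxlt : Classical.choose hQB < m := by
        by_contra hcon
        have he : Classical.choose hQB = m := by omega
        rw [he] at hw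
        exact hQA (qbw_m_QA hm hw)
      have hb1 : Classical.choose hQB < m + 1 := by omega
      have hb2 : suN m (Classical.choose hQB) < m + 1 := by
        have := suN_lt hm (Classical.choose hQB); omega
      have hG : G0 hm τ
          = τ * rhoB hm ⟨Classical.choose hQB, hb1⟩ ⟨suN m (Classical.choose hQB), hb2⟩ := by
        unfold G0
        rw [dif_neg hQA, dif_pos hQB]
      have hPBW : PBW m (suN m (Classical.choose hQB))
          (τ * rhoB hm ⟨Classical.choose hQB, hb1⟩ ⟨suN m (Classical.choose hQB), hb2⟩) :=
        QBW_to_PBW hm ⟨Classical.choose hQB, hb1⟩ ⟨suN m (Classical.choose hQB), hb2⟩ τ hw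
      have hPB : PB m (τ * rhoB hm ⟨Classical.choose hQB, hb1⟩
          ⟨suN m (Classical.choose hQB), hb2⟩) :=
        ⟨suN m (Classical.choose hQB), by have := suN_lt hm (Classical.choose hQB); omega, hPBW⟩
      have hnPA : ¬ PA m (τ * rhoB hm ⟨Classical.choose hQB, hb1⟩
          ⟨suN m (Classical.choose hQB), hb2⟩) := by
        intro hPA
        rcases pbw_PA_cases hm (by have := suN_lt hm (Classical.choose hQB); omega) hPBW hPA with h1 | ⟨h1, h2⟩
        · have := suN_lt hm (Classical.choose hQB); omega
        · have hcx1 : Classical.choose hQB = m - 1 := by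
            unfold suN at h1
            split at h1 <;> omega
          have hat := rhoB_at hm (⟨Classical.choose hQB, hb1⟩ : Fin (m+1))
            (⟨suN m (Classical.choose hQB), hb2⟩ : Fin (m+1)) τ
          have e1 : ((⟨((⟨suN m (Classical.choose hQB), hb2⟩ : Fin (m+1)) : ℕ), by omega⟩ : Fin (2*m)))
              = ⟨0, by omega⟩ := Fin.ext (by simp only [Fin.val_mk]; exact h1)
          have e2 : ((⟨((⟨Classical.choose hQB, hb1⟩ : Fin (m+1)) : ℕ), by omega⟩ : Fin (2*m)))
              = ⟨m-1, by omega⟩ := Fin.ext (by simp only [Fin.val_mk]; exact hcx1)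
          rw [e1, e2] at hat
          have hval0 : (τ ⟨m-1, by omega⟩ : ℕ) = m - 1 := by rw [← hat]; exact h2
          exact hQA (qbw_m1_QA hm (hcx1 ▸ hw) hval0)
      rw [hG]
      refine ⟨Or.inr (Or.inl hPB), ?_⟩
      unfold F0
      rw [dif_neg hnPA, dif_pos hPB]
      have hspec' := Classical.choose_spec hPB
      have hcym : Classical.choose hPB ≤ m := hspec'.1
      have hw' : PBW m (Classical.choose hPB)
          (τ * rhoB hm ⟨Classical.choose hQB, hb1⟩ ⟨suN m (Classical.choose hQB), hb2⟩) :=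
        hspec'.2
      have huniq : Classical.choose hPB = suN m (Classical.choose hQB) := by
        refine low_unique hm hcym (by have := suN_lt hm (Classical.choose hQB); omega) hw'.1 hPBW.1
      have e3 : (⟨Classical.choose hPB, by omega⟩ : Fin (m+1))
          = ⟨suN m (Classical.choose hQB), hb2⟩ := Fin.ext (by simp only [Fin.val_mk]; exact huniq)
      have e4 : (⟨sdN m (Classical.choose hPB), by have := sdN_lt hm hcym; omega⟩ : Fin (m+1))
          = ⟨Classical.choose hQB, hb1⟩ := Fin.ext (by
            simp only [Fin.val_mk, huniq]
            exact sdN_suN hm hxlt)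
      rw [e3, e4]
      exact rhoB_sq hm _ _ τ
    · have hQL : QL m τ := by tauto
      have hG : G0 hm τ = τ * rho4 m := by
        unfold G0
        rw [dif_neg hQA, dif_neg hQB]
      have hreg := (region3_iff hm (τ * rho4 m)).mpr (by
        rw [rho4_sq]
        exact ⟨hQL, hQA, hQB⟩)
      rw [hG]
      refine ⟨Or.inr (Or.inr hreg.1), ?_⟩
      unfold F0
      rw [dif_neg hreg.2.1, dif_neg hreg.2.2, rho4_sq]

lemma F0_mem (hm : 1 ≤ m) (s : {σ : Equiv.Perm (Fin (2*m)) // HasCrossing (2*m) m σ}) :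
    HasNesting (2*m) m (F0 hm s.1) :=
  (nest_iff hm _).mpr (F0_spec hm s.1 ((cross_iff hm s.1).mp s.2)).1

lemma G0_mem (hm : 1 ≤ m) (s : {σ : Equiv.Perm (Fin (2*m)) // HasNesting (2*m) m σ}) :
    HasCrossing (2*m) m (G0 hm s.1) :=
  (cross_iff hm _).mpr (G0_spec hm s.1 ((nest_iff hm s.1).mp s.2)).1

lemma card_even (hm : 1 ≤ m) :
    Nat.card {σ : Equiv.Perm (Fin (2*m)) // HasCrossing (2*m) m σ}
      = Nat.card {σ : Equiv.Perm (Fin (2*m)) // HasNesting (2*m) m σ} := by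
  apply Nat.card_congr
  refine
    { toFun := fun s => ⟨F0 hm s.1, F0_mem hm s⟩
      invFun := fun s => ⟨G0 hm s.1, G0_mem hm s⟩
      left_inv := ?_
      right_inv := ?_ }
  · intro s
    apply Subtype.ext
    exact (F0_spec hm s.1 ((cross_iff hm s.1).mp s.2)).2
  · intro s
    apply Subtype.ext
    exact (G0_spec hm s.1 ((nest_iff hm s.1).mp s.2)).2

end Assembly
end MCN

/-- The number of permutations of S_n containing a maximum (⌈n/2⌉-) crossing equals
the number containing a maximum (⌈n/2⌉-) nesting. -/
theorem max_crossing_eq_max_nesting_count (n : ℕ) :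
    Nat.card {σ : Equiv.Perm (Fin n) // HasCrossing n ((n + 1) / 2) σ}
      = Nat.card {σ : Equiv.Perm (Fin n) // HasNesting n ((n + 1) / 2) σ} := by
  rcases Nat.even_or_odd n with he | ho
  · obtain ⟨m, rfl⟩ : ∃ m, n = 2 * m := by
      obtain ⟨t, ht⟩ := he
      exact ⟨t, by omega⟩
    rcases Nat.eq_zero_or_pos m with rfl | hm
    · apply Nat.card_congr
      refine Equiv.subtypeEquivRight (fun σ => ?_)
      have hC : HasCrossing (2*0) ((2*0+1)/2) σ := by
        refine ⟨fun i => i.elim0, Or.inl ⟨?_, ?_, ?_⟩⟩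
        · intro a
          exact a.elim0
        · intro a
          exact a.elim0
        · intro i
          exact i.elim0
      have hN : HasNesting (2*0) ((2*0+1)/2) σ := by
        refine ⟨fun i => i.elim0, Or.inl ⟨?_, ?_, ?_⟩⟩
        · intro a
          exact a.elim0
        · intro a
          exact a.elim0
        · intro i
          exact i.elim0
      exact iff_of_true hC hN
    · have hk : (2*m+1)/2 = m := by omega
      rw [hk]
      exact MCN.card_even hm
  · obtain ⟨m, rfl⟩ := ho
    have hk : (2*m+1+1)/2 = m+1 := by omega
    rw [hk]
    exact MCN.card_odd m
end
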